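/- arXiv:2101.04729 — 8 statements merged into one kernel-verified Lean document; each statement's English description precedes it below -/
import Mathlib

section
/- With g_{-1}(p) = (1/q)·((1-2pq)/(1 - ln(q)·√(2/p)·(1 - √(p/2))))^(√(p/2)) and q = 1-p, one has ln g_{-1}(p) = -(5/3)p² + O(p^(5/2)) as p → 0⁺; in particular g_{-1}(p) < 1 for all sufficiently small p > 0. -/
/-!
Substituting `p = 2t²` turns `√(p/2)` into `t` and `√(2/p)` into `t⁻¹`, so that
`log g₋₁(2t²) = -log(1 - 2t²) + t (log N(t) - log D(t))` with `N(t) = 1 - 4t² + 8t⁴` and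
`D(t) = 1 - log(1 - 2t²)(1 - t)/t = 1 + 2t - 2t² + 2t³ + O(t⁴)`. Expanding the three logarithms,
the terms of order `t²` and `t³` cancel and `log g₋₁(2t²) = -20/3 t⁴ + O(t⁵)`, i.e.
`log g₋₁(p) = -5/3 p² + O(p^{5/2})`. As `p^{5/2} = o(p²)`, `log g₋₁(p) < 0` for small `p > 0`.
-/

open Asymptotics Filter
open Real Topology

lemma isBigO_log_one_sub_add_sum (n : ℕ) :
    (fun x : ℝ => log (1 - x) + ∑ i ∈ Finset.range n, x ^ (i + 1) / (i + 1)) =O[𝓝 0]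
      fun x => x ^ (n + 1) := by
  refine IsBigO.of_bound 2 ?_
  filter_upwards [Metric.ball_mem_nhds (0 : ℝ) (by norm_num : (0 : ℝ) < 1 / 2)] with x hx
  rw [Metric.mem_ball, dist_zero_right, norm_eq_abs] at hx
  rw [norm_eq_abs, norm_eq_abs, abs_pow, add_comm]
  calc _ ≤ |x| ^ (n + 1) / (1 - |x|) := abs_log_sub_add_sum_range_le (by linarith) n
    _ ≤ 2 * |x| ^ (n + 1) := by
      rw [div_le_iff₀ (by linarith)]
      nlinarith [pow_nonneg (abs_nonneg x) (n + 1)]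

lemma isBigO_pow_mul_of_continuous (k : ℕ) {c : ℝ → ℝ} (hc : Continuous c) :
    (fun t => t ^ k * c t) =O[𝓝 0] fun t => t ^ k :=
  ((isBigO_refl _ _).mul ((hc.tendsto 0).isBigO_one ℝ)).congr_right fun _ => mul_one _

lemma abs_log_sub_log_le {a b : ℝ} (ha : 1 ≤ a) (hb : 1 ≤ b) : |log a - log b| ≤ |a - b| := by
  have key : ∀ x y : ℝ, 1 ≤ x → 1 ≤ y → log x - log y ≤ |x - y| := fun x y hx hy => by
    rw [← log_div (by positivity) (by positivity)]
    calc log (x / y) ≤ x / y - 1 := log_le_sub_one_of_pos (by positivity)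
      _ = (x - y) / y := by field_simp
      _ ≤ |x - y| := by
        rw [div_le_iff₀ (by positivity)]
        nlinarith [le_abs_self (x - y), abs_nonneg (x - y)]
  exact abs_sub_le_iff.2 ⟨key a b ha hb, abs_sub_comm a b ▸ key b a hb ha⟩

lemma isLittleO_rpow_sq_nhdsGT_zero {a : ℝ} (ha : 2 < a) :
    (fun p : ℝ => p ^ a) =o[𝓝[>] 0] fun p => p ^ 2 := by
  have h : Tendsto (fun p : ℝ => p ^ (a - 2)) (𝓝[>] 0) (𝓝 0) := by
    have := (continuousAt_rpow_const 0 (a - 2) (Or.inr (by linarith))).tendsto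
    rw [zero_rpow (by linarith)] at this
    exact this.mono_left nhdsWithin_le_nhds
  refine ((isBigO_refl (fun p : ℝ => p ^ 2) _).mul_isLittleO
    ((isLittleO_one_iff ℝ).2 h)).congr' ?_ (.of_eq (funext fun _ => mul_one _))
  filter_upwards [self_mem_nhdsWithin] with p (hp : 0 < p)
  rw [← rpow_natCast, ← rpow_add hp]
  norm_num

lemma eventually_neg_of_isBigO_rpow {f : ℝ → ℝ} {c a : ℝ} (hc : 0 < c) (ha : 2 < a)
    (hf : (fun p => f p - (-c * p ^ 2)) =O[𝓝[>] 0] fun p => p ^ a) :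
    ∀ᶠ p in 𝓝[>] 0, f p < 0 := by
  filter_upwards [(hf.trans_isLittleO (isLittleO_rpow_sq_nhdsGT_zero ha)).bound (half_pos hc),
    self_mem_nhdsWithin] with p hp (hp0 : 0 < p)
  rw [norm_eq_abs, norm_of_nonneg (by positivity)] at hp
  nlinarith [le_abs_self (f p - -c * p ^ 2), mul_pos hc (pow_pos hp0 2)]

lemma one_le_one_sub_log_one_sub_two_mul_sq_mul_inv {t : ℝ} (ht : 0 ≤ t)
    (ht' : 2 * t ^ 2 ≤ 1) :
    1 ≤ 1 - log (1 - 2 * t ^ 2) * t⁻¹ * (1 - t) := by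
  have hL : log (1 - 2 * t ^ 2) ≤ 0 := log_nonpos (by linarith) (by nlinarith)
  have ht1 : 0 ≤ 1 - t := by nlinarith
  have hv :=
    mul_nonpos_of_nonpos_of_nonneg (mul_nonpos_of_nonpos_of_nonneg hL (inv_nonneg.2 ht)) ht1
  linarith

lemma isBigO_log_one_sub_two_mul_sq :
    (fun t : ℝ => log (1 - 2 * t ^ 2) + 2 * t ^ 2 + 2 * t ^ 4) =O[𝓝 0] fun t => t ^ 6 := by
  have h := (isBigO_log_one_sub_add_sum 2).comp_tendsto
    ((by fun_prop : Continuous fun t : ℝ => 2 * t ^ 2).tendsto' 0 0 (by norm_num))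
  refine (h.congr_left fun t => ?_).trans (isBigO_of_le' (c := 8) _ fun t => ?_)
  · simp only [Function.comp_apply, Finset.sum_range_succ]; norm_num; ring
  · norm_num [mul_pow, ← pow_mul]

lemma isBigO_log_one_sub_two_mul_sq_mul_one_sub :
    (fun t : ℝ => log (1 - 2 * (2 * t ^ 2) * (1 - 2 * t ^ 2)) + 4 * t ^ 2) =O[𝓝 0]
      fun t => t ^ 4 := by
  have h := (isBigO_log_one_sub_add_sum 1).comp_tendsto
    ((by fun_prop : Continuous fun t : ℝ => 2 * (2 * t ^ 2) * (1 - 2 * t ^ 2)).tendsto' 0 0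
      (by norm_num))
  have hx := isBigO_pow_mul_of_continuous 2 (by fun_prop : Continuous fun t : ℝ =>
    4 * (1 - 2 * t ^ 2))
  have h4 : (fun t : ℝ => t ^ 4) =O[𝓝 0] fun t => t ^ 4 := isBigO_refl _ _
  refine ((h.trans ?_).add (h4.const_mul_left 8)).congr_left fun t => ?_
  · exact (hx.pow 2).congr (fun t => by simp only [Function.comp_apply]; ring) fun t => by ring
  · simp only [Function.comp_apply, Finset.sum_range_one]
    norm_num
    ring

lemma isBigO_log_one_sub_two_mul_sq_mul_inv :
    (fun t : ℝ => log (1 - 2 * t ^ 2) * t⁻¹ * (1 - t) + (2 * t - 2 * t ^ 2 + 2 * t ^ 3))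
      =O[𝓝[>] 0] fun t => t ^ 4 := by
  have h := (isBigO_log_one_sub_two_mul_sq.mono nhdsWithin_le_nhds).mul
    (isBigO_refl (fun t : ℝ => t⁻¹ * (1 - t)) (𝓝[>] 0))
  have h4 := isBigO_pow_mul_of_continuous 4 (by fun_prop : Continuous fun t : ℝ => t * (1 - t))
  -- the function equals `(log (1 - 2t²) + 2t² + 2t⁴) t⁻¹ (1 - t) + 2t⁴`
  refine ((h.trans ?_).add ((isBigO_refl (fun t : ℝ => t ^ 4) _).const_mul_left 2)).congr' ?_ .rfl
  · refine (h4.mono nhdsWithin_le_nhds).congr' ?_ .rfl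
    filter_upwards [self_mem_nhdsWithin] with t (ht : 0 < t)
    field_simp
  · filter_upwards [self_mem_nhdsWithin] with t (ht : 0 < t)
    field_simp
    ring

lemma isBigO_log_one_add_two_mul_sub :
    (fun t : ℝ => log (1 + (2 * t - 2 * t ^ 2 + 2 * t ^ 3)) - (2 * t - 4 * t ^ 2 + 26 / 3 * t ^ 3))
      =O[𝓝 0] fun t => t ^ 4 := by
  have h := (isBigO_log_one_sub_add_sum 3).comp_tendsto
    ((by fun_prop : Continuous fun t : ℝ => -(2 * t - 2 * t ^ 2 + 2 * t ^ 3)).tendsto' 0 0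
      (by norm_num))
  have hP := isBigO_pow_mul_of_continuous 1
    (by fun_prop : Continuous fun t : ℝ => -(2 - 2 * t + 2 * t ^ 2))
  -- `P - P²/2 + P³/3 - (2t - 4t² + 26/3 t³)` for `P = 2t - 2t² + 2t³`
  have hR := isBigO_pow_mul_of_continuous 4 (by fun_prop : Continuous fun t : ℝ =>
    -14 + 20 * t - 62 / 3 * t ^ 2 + 16 * t ^ 3 - 8 * t ^ 4 + 8 / 3 * t ^ 5)
  have hP4 : (fun t : ℝ => (-(2 * t - 2 * t ^ 2 + 2 * t ^ 3)) ^ 4) =O[𝓝 0] fun t => t ^ 4 :=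
    (hP.pow 4).congr (fun t => by ring) fun t => by ring
  refine ((h.trans hP4).add hR).congr_left fun t => ?_
  simp only [Function.comp_apply, Finset.sum_range_succ, sub_neg_eq_add]
  norm_num
  ring

lemma isBigO_log_one_sub_log_one_sub_two_mul_sq_mul_inv :
    (fun t : ℝ => log (1 - log (1 - 2 * t ^ 2) * t⁻¹ * (1 - t))
      - (2 * t - 4 * t ^ 2 + 26 / 3 * t ^ 3)) =O[𝓝[>] 0] fun t => t ^ 4 := by
  have hlip : (fun t : ℝ => log (1 - log (1 - 2 * t ^ 2) * t⁻¹ * (1 - t))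
      - log (1 + (2 * t - 2 * t ^ 2 + 2 * t ^ 3))) =O[𝓝[>] 0] fun t => t ^ 4 := by
    refine IsBigO.trans ?_ isBigO_log_one_sub_two_mul_sq_mul_inv
    refine IsBigO.of_bound 1 ?_
    filter_upwards [Ioo_mem_nhdsGT (by norm_num : (0 : ℝ) < 1 / 2)] with t ⟨ht0, ht1⟩
    rw [norm_eq_abs, norm_eq_abs, one_mul]
    refine (abs_log_sub_log_le (one_le_one_sub_log_one_sub_two_mul_sq_mul_inv ht0.le
      (by nlinarith)) (by nlinarith)).trans_eq ?_
    rw [← abs_neg]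
    ring_nf
  exact (hlip.add (isBigO_log_one_add_two_mul_sub.mono nhdsWithin_le_nhds)).congr_left
    fun t => by abel

noncomputable def gMinusOne (p : ℝ) : ℝ :=
  (1 / (1 - p)) * ((1 - 2 * p * (1 - p)) / (1 - log (1 - p) * √(2 / p) * (1 - √(p / 2))))
    ^ √(p / 2)

lemma log_gMinusOne_two_mul_sq {t : ℝ} (ht : 0 < t) (ht' : 2 * t ^ 2 < 1) :
    log (gMinusOne (2 * t ^ 2)) = -log (1 - 2 * t ^ 2) + t * (log (1 - 2 * (2 * t ^ 2) *
      (1 - 2 * t ^ 2)) - log (1 - log (1 - 2 * t ^ 2) * t⁻¹ * (1 - t))) := by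
  have hN : 0 < 1 - 2 * (2 * t ^ 2) * (1 - 2 * t ^ 2) := by nlinarith [sq_nonneg (1 - 4 * t ^ 2)]
  have hD := one_le_one_sub_log_one_sub_two_mul_sq_mul_inv ht.le ht'.le
  have hsqrt : √(2 * t ^ 2 / 2) = t := by
    rw [mul_div_cancel_left₀ _ two_ne_zero, sqrt_sq ht.le]
  have hsqrt_inv : √(2 / (2 * t ^ 2)) = t⁻¹ := by
    rw [div_mul_cancel_left₀ two_ne_zero, ← inv_pow, sqrt_sq (inv_nonneg.2 ht.le)]
  have hbase : 0 < (1 - 2 * (2 * t ^ 2) * (1 - 2 * t ^ 2)) /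
      (1 - log (1 - 2 * t ^ 2) * t⁻¹ * (1 - t)) := div_pos hN (by linarith)
  rw [gMinusOne, hsqrt, hsqrt_inv, log_mul (by simp; linarith) (rpow_pos_of_pos hbase t).ne',
    log_rpow hbase, log_div hN.ne' (by linarith), one_div, log_inv]

lemma isBigO_log_gMinusOne_two_mul_sq :
    (fun t : ℝ => log (gMinusOne (2 * t ^ 2)) + 20 / 3 * t ^ 4) =O[𝓝[>] 0] fun t => t ^ 5 := by
  have hid := isBigO_refl (fun t : ℝ => t) (𝓝[>] 0)
  have hL := (isBigO_log_one_sub_two_mul_sq.trans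
    (isLittleO_pow_pow (by norm_num : 5 < 6)).isBigO).mono (nhdsWithin_le_nhds (s := Set.Ioi 0))
  have hN := (hid.mul (isBigO_log_one_sub_two_mul_sq_mul_one_sub.mono nhdsWithin_le_nhds))
    |>.congr_right (g₂ := fun t => t ^ 5) fun t => by ring
  have hD := (hid.mul isBigO_log_one_sub_log_one_sub_two_mul_sq_mul_inv).congr_right
    (g₂ := fun t => t ^ 5) fun t => by ring
  refine ((hL.neg_left.add hN).sub hD).congr' ?_ .rfl
  filter_upwards [Ioo_mem_nhdsGT (by norm_num : (0 : ℝ) < 1 / 2)] with t ⟨ht0, ht1⟩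
  rw [log_gMinusOne_two_mul_sq ht0 (by nlinarith)]
  ring

lemma isBigO_log_gMinusOne :
    (fun p => log (gMinusOne p) - (-(5 / 3) * p ^ 2)) =O[𝓝[>] 0] fun p => p ^ ((5 : ℝ) / 2) := by
  have hsqrt : Tendsto (fun p : ℝ => √(p / 2)) (𝓝[>] 0) (𝓝[>] 0) := by
    refine tendsto_nhdsWithin_iff.2 ⟨?_, ?_⟩
    · exact ((by fun_prop : Continuous fun p : ℝ => √(p / 2)).tendsto' 0 0 (by simp)).mono_left
        nhdsWithin_le_nhds
    · filter_upwards [self_mem_nhdsWithin] with p (hp : 0 < p)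
      exact sqrt_pos.2 (half_pos hp)
  refine ((isBigO_log_gMinusOne_two_mul_sq.comp_tendsto hsqrt).congr' ?_ .rfl).trans ?_
  · filter_upwards [self_mem_nhdsWithin] with p (hp : 0 < p)
    have h2 : √(p / 2) ^ 2 = p / 2 := sq_sqrt (by positivity)
    simp only [Function.comp_apply, show √(p / 2) ^ 4 = (√(p / 2) ^ 2) ^ 2 by ring, h2]
    rw [mul_div_cancel₀ _ two_ne_zero]
    ring
  · refine IsBigO.of_bound 1 ?_
    filter_upwards [self_mem_nhdsWithin] with p (hp : 0 < p)
    rw [one_mul, Function.comp_apply, norm_pow, norm_of_nonneg (sqrt_nonneg _),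
      norm_of_nonneg (by positivity), sqrt_eq_rpow, ← rpow_natCast, ← rpow_mul (by positivity)]
    norm_num
    exact rpow_le_rpow (by positivity) (by linarith) (by norm_num)

theorem stmt_7 :
    ∀ gneg : ℝ → ℝ,
      (∀ p, gneg p = (1 / (1 - p)) * ((1 - 2 * p * (1 - p)) /
        (1 - Real.log (1 - p) * Real.sqrt (2 / p) * (1 - Real.sqrt (p / 2))))
        ^ (Real.sqrt (p / 2))) →
    (fun p : ℝ => Real.log (gneg p) - (-(5 / 3) * p ^ 2))
      =O[nhdsWithin 0 (Set.Ioi 0)] (fun p : ℝ => p ^ ((5:ℝ) / 2)) ∧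
    ∀ᶠ p : ℝ in nhdsWithin 0 (Set.Ioi 0), gneg p < 1 := by
  intro gneg hg
  obtain rfl : gneg = gMinusOne := funext hg
  refine ⟨isBigO_log_gMinusOne, ?_⟩
  filter_upwards [eventually_neg_of_isBigO_rpow (by norm_num) (by norm_num) isBigO_log_gMinusOne]
    with p hp
  exact lt_of_not_ge fun h => (log_nonneg h).not_gt hp
end

section
/- The function g_0(p) = (1/q)·((1-2pq)/(q·(1 - ln(q)·√(2/p))))^(√(p/2)), with q = 1-p, has exactly one zero of g_0 - 1 on the interval (0, (3-√5)/2); this zero p* satisfies p* ≈ 0.1711. -/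
/-!
Write `q = 1 - p` and `τ = -log q · √(2/p)`. Taking logarithms,
`g₀ p = exp (√(p/2) · φ p)` with `φ = τ - log (1 + τ) + log (1 - 2pq) - log q`, so the
roots of `g₀ - 1` are those of `φ`. The bounds `p ≤ -log q ≤ p/q` give
`φ' ≥ 1/(q(1 + √(2p))) + 1/q - (2 - 4p)/(1 - 2pq)`, which is positive on `[3/20, 1/2]`,
and Taylor bounds for `log` show that `φ` changes sign between `0.1706` and `0.1716`.
The intermediate value theorem gives the root, and strict monotonicity of `φ` makes it
unique.
-/

open Real Set

namespace Real

lemma one_sub_two_mul_mul_one_sub_pos (p : ℝ) : 0 < 1 - 2 * p * (1 - p) := by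
  nlinarith [sq_nonneg (2 * p - 1)]

lemma le_neg_log_one_sub {p : ℝ} (hp : p < 1) : p ≤ -log (1 - p) := by
  linarith [log_le_sub_one_of_pos (sub_pos.2 hp)]

lemma neg_log_one_sub_le {p : ℝ} (hp : p < 1) : -log (1 - p) ≤ p / (1 - p) := by
  have h := one_sub_inv_le_log_of_pos (sub_pos.2 hp)
  have : 1 - (1 - p)⁻¹ = -(p / (1 - p)) := by field_simp [(sub_pos.2 hp).ne']; ring
  linarith

lemma sub_log_one_add_le_sub_log_one_add {a b : ℝ} (ha : 0 ≤ a) (hab : a ≤ b) :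
    a - log (1 + a) ≤ b - log (1 + b) := by
  have hb : 0 ≤ b := ha.trans hab
  have h := log_le_sub_one_of_pos (show 0 < (1 + b) / (1 + a) by positivity)
  rw [log_div (by positivity) (by positivity)] at h
  have : (1 + b) / (1 + a) - 1 ≤ b - a := by
    rw [div_sub_one (by positivity), div_le_iff₀ (by positivity)]
    nlinarith
  linarith

lemma log_two_mul_div_mul {N A q : ℝ} (hN : 0 < N) (hA : 0 < A) (hq : 0 < q) :
    log (2 * N / (A * q)) = log 2 + log N - log A - log q := by
  rw [log_div (by positivity) (by positivity), log_mul two_ne_zero hN.ne',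
    log_mul hA.ne' hq.ne']
  ring

lemma neg_log_one_sub_le_sum {x : ℝ} (hx0 : 0 ≤ x) (hx1 : x < 1) (n : ℕ) :
    -log (1 - x) ≤ ∑ i ∈ Finset.range n, x ^ (i + 1) / (i + 1) + x ^ (n + 1) / (1 - x) := by
  have h := abs_log_sub_add_sum_range_le (x := x) (by rwa [abs_of_nonneg hx0]) n
  rw [abs_of_nonneg hx0] at h
  linarith [(abs_le.1 h).1]

lemma sum_sub_le_neg_log_one_sub {x : ℝ} (hx0 : 0 ≤ x) (hx1 : x < 1) (n : ℕ) :
    ∑ i ∈ Finset.range n, x ^ (i + 1) / (i + 1) - x ^ (n + 1) / (1 - x) ≤ -log (1 - x) := by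
  have h := abs_log_sub_add_sum_range_le (x := x) (by rwa [abs_of_nonneg hx0]) n
  rw [abs_of_nonneg hx0] at h
  linarith [(abs_le.1 h).2]

lemma log_le_neg_sum_add {y : ℝ} (hy : |1 - y| < 1) (n : ℕ) :
    log y ≤ -∑ i ∈ Finset.range n, (1 - y) ^ (i + 1) / (i + 1) +
      |1 - y| ^ (n + 1) / (1 - |1 - y|) := by
  have h := abs_log_sub_add_sum_range_le hy n
  rw [sub_sub_cancel] at h
  linarith [(abs_le.1 h).2]

lemma neg_sum_sub_le_log {y : ℝ} (hy : |1 - y| < 1) (n : ℕ) :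
    -∑ i ∈ Finset.range n, (1 - y) ^ (i + 1) / (i + 1) -
      |1 - y| ^ (n + 1) / (1 - |1 - y|) ≤ log y := by
  have h := abs_log_sub_add_sum_range_le hy n
  rw [sub_sub_cancel] at h
  linarith [(abs_le.1 h).1]

end Real

namespace Sterrett

noncomputable def tau (p : ℝ) : ℝ := -log (1 - p) * √(2 / p)

noncomputable def phi (p : ℝ) : ℝ :=
  tau p - log (1 + tau p) + log (1 - 2 * p * (1 - p)) - log (1 - p)

lemma tau_pos {p : ℝ} (hp0 : 0 < p) (hp1 : p < 1) : 0 < tau p :=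
  mul_pos (by linarith [le_neg_log_one_sub hp1]) (sqrt_pos.2 (by positivity))

lemma formula_eq_exp {p : ℝ} (hp0 : 0 < p) (hp1 : p < 1) :
    (1 / (1 - p)) * ((1 - 2 * p * (1 - p)) /
      ((1 - p) * (1 - log (1 - p) * √(2 / p)))) ^ √(p / 2) = exp (√(p / 2) * phi p) := by
  have hq : 0 < 1 - p := sub_pos.2 hp1
  have hN := one_sub_two_mul_mul_one_sub_pos p
  have hw : 0 < 1 + tau p := by linarith [tau_pos hp0 hp1]
  have hsq : √(p / 2) * √(2 / p) = 1 := by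
    rw [← sqrt_mul (by positivity), div_mul_div_comm, mul_comm p 2, div_self (by positivity),
      sqrt_one]
  rw [show 1 - log (1 - p) * √(2 / p) = 1 + tau p by unfold tau; ring,
    rpow_def_of_pos (div_pos hN (mul_pos hq hw)), one_div,
    show (1 - p)⁻¹ = exp (-log (1 - p)) by rw [exp_neg, exp_log hq], ← exp_add,
    log_div hN.ne' (mul_pos hq hw).ne', log_mul hq.ne' hw.ne']
  congr 1
  unfold phi tau
  linear_combination (log (1 - p)) * hsq

lemma hasDerivAt_tau {p : ℝ} (hp0 : 0 < p) (hp1 : p < 1) :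
    HasDerivAt tau (√(2 / p) * (1 / (1 - p) - -log (1 - p) / (2 * p))) p := by
  have hq : 0 < 1 - p := sub_pos.2 hp1
  have hs2 : √(2 / p) ^ 2 = 2 / p := sq_sqrt (by positivity)
  have hL : HasDerivAt (fun x => -log (1 - x)) (1 / (1 - p)) p :=
    (((hasDerivAt_id' p).const_sub 1).log hq.ne').neg.congr_deriv (by ring)
  have hS : HasDerivAt (fun x => √(2 / x)) (-(√(2 / p) / (2 * p))) p := by
    refine (((hasDerivAt_inv hp0.ne').const_mul 2).sqrt (by positivity)).congr_deriv ?_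
    field_simp
    rw [hs2]
    field_simp
  exact (hL.mul hS).congr_deriv (by ring)

noncomputable def phi' (p : ℝ) : ℝ :=
  √(2 / p) * (1 / (1 - p) - -log (1 - p) / (2 * p)) * (tau p / (1 + tau p))
    + (4 * p - 2) / (1 - 2 * p * (1 - p)) + 1 / (1 - p)

lemma hasDerivAt_phi {p : ℝ} (hp0 : 0 < p) (hp1 : p < 1) :
    HasDerivAt phi (phi' p) p := by
  have hq : 0 < 1 - p := sub_pos.2 hp1
  have hw : 0 < 1 + tau p := by linarith [tau_pos hp0 hp1]
  have hT := hasDerivAt_tau hp0 hp1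
  have hN : HasDerivAt (fun x => 1 - 2 * x * (1 - x)) (4 * p - 2) p :=
    ((((hasDerivAt_id' p).const_mul 2).mul ((hasDerivAt_id' p).const_sub 1))).const_sub 1
      |>.congr_deriv (by ring)
  have hQ : HasDerivAt (fun x => 1 - x) (-1) p :=
    ((hasDerivAt_id' p).const_sub 1).congr_deriv (by ring)
  refine (((hT.sub (hT.const_add 1 |>.log hw.ne')).add
    (hN.log (one_sub_two_mul_mul_one_sub_pos p).ne')).sub (hQ.log hq.ne')).congr_deriv ?_
  unfold phi'
  field_simp
  ring

-- `p ≤ -log (1 - p) ≤ p / (1 - p)` bounds the two factors of the first summand of `phi'`.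
lemma one_div_le_deriv_tau_mul {p : ℝ} (hp0 : 0 < p) (hp1 : p < 1) :
    1 / ((1 - p) * (1 + p * √(2 / p))) ≤
      √(2 / p) * (1 / (1 - p) - -log (1 - p) / (2 * p)) * (tau p / (1 + tau p)) := by
  have hq : 0 < 1 - p := sub_pos.2 hp1
  set s := √(2 / p)
  have hs : 0 < s := sqrt_pos.2 (by positivity)
  have hps : p * s ^ 2 = 2 := by rw [sq_sqrt (by positivity)]; field_simp
  have hdtau : s / (2 * (1 - p)) ≤ s * (1 / (1 - p) - -log (1 - p) / (2 * p)) := by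
    have h := (le_div_iff₀ hq).1 (neg_log_one_sub_le hp1)
    have : -log (1 - p) / (2 * p) ≤ 1 / (2 * (1 - p)) := by
      rw [div_le_div_iff₀ (by positivity) (by positivity)]
      nlinarith
    have : s / (2 * (1 - p)) = s * (1 / (1 - p) - 1 / (2 * (1 - p))) := by field_simp; ring
    rw [this]
    gcongr
  have hratio : p * s / (1 + p * s) ≤ tau p / (1 + tau p) := by
    have h : p * s ≤ tau p := mul_le_mul_of_nonneg_right (le_neg_log_one_sub hp1) hs.le
    rw [div_le_div_iff₀ (by positivity) (by linarith [tau_pos hp0 hp1])]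
    nlinarith
  calc 1 / ((1 - p) * (1 + p * s)) = s / (2 * (1 - p)) * (p * s / (1 + p * s)) := by
        field_simp; linear_combination -hps
    _ ≤ _ := mul_le_mul hdtau hratio (by positivity)
        ((by positivity : (0 : ℝ) ≤ s / (2 * (1 - p))).trans hdtau)

lemma phi'_pos {p : ℝ} (hp0 : 3 / 20 ≤ p) (hp1 : p ≤ 1 / 2) : 0 < phi' p := by
  have hp : 0 < p := by linarith
  have hq : 0 < 1 - p := by linarith
  have hbound := one_div_le_deriv_tau_mul hp (by linarith)
  set u := p * √(2 / p)
  have hu : 0 < u := mul_pos hp (sqrt_pos.2 (by positivity))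
  have hu2 : u ^ 2 = 2 * p := by
    rw [mul_pow, sq_sqrt (by positivity)]; field_simp
  have hN := one_sub_two_mul_mul_one_sub_pos p
  set N := 1 - 2 * p * (1 - p)
  have key : 0 < 1 / ((1 - p) * (1 + u)) + (4 * p - 2) / N + 1 / (1 - p) := by
    have : 1 / ((1 - p) * (1 + u)) + (4 * p - 2) / N + 1 / (1 - p) =
        (N * (2 + u) + (4 * p - 2) * (1 - p) * (1 + u)) / ((1 - p) * (1 + u) * N) := by
      field_simp
      ring
    rw [this]
    apply div_pos _ (by positivity)
    nlinarith [mul_nonneg (sub_nonneg.2 hp0) (sub_nonneg.2 hp1), mul_pos hu hu]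
  unfold phi'
  linarith

lemma continuousOn_phi : ContinuousOn phi (Ioo 0 1) := fun _ hp =>
  (hasDerivAt_phi hp.1 hp.2).continuousAt.continuousWithinAt

lemma strictMonoOn_phi : StrictMonoOn phi (Icc (3 / 20) (1 / 2)) := by
  refine strictMonoOn_of_hasDerivWithinAt_pos (f' := phi') (convex_Icc _ _)
    (continuousOn_phi.mono (Icc_subset_Ioo (by norm_num) (by norm_num)))
    (fun p hp => ?_) (fun p hp => ?_) <;> rw [interior_Icc] at hp
  · exact (hasDerivAt_phi (by linarith [hp.1]) (by linarith [hp.2])).hasDerivWithinAt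
  · exact phi'_pos hp.1.le hp.2.le

-- Splitting off `log 2` leaves the logarithm of a number close to `1`, where the Taylor
-- bounds for `log` are sharp.
lemma phi_le {p L s c : ℝ} (hp0 : 0 < p) (hp1 : p < 1) (hL : -log (1 - p) ≤ L)
    (hs : √(2 / p) ≤ s) (hc : log (2 * (1 - 2 * p * (1 - p)) / ((1 + L * s) * (1 - p))) ≤ c) :
    phi p ≤ L * s - log 2 + c := by
  have hτ := tau_pos hp0 hp1
  have hT : tau p ≤ L * s :=
    mul_le_mul hL hs (sqrt_nonneg _) (by linarith [le_neg_log_one_sub hp1])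
  rw [log_two_mul_div_mul (one_sub_two_mul_mul_one_sub_pos p) (by linarith) (by linarith)] at hc
  unfold phi
  linarith [sub_log_one_add_le_sub_log_one_add hτ.le hT]

lemma le_phi {p L s c : ℝ} (hp1 : p < 1) (hL0 : 0 ≤ L) (hs0 : 0 ≤ s)
    (hL : L ≤ -log (1 - p)) (hs : s ≤ √(2 / p))
    (hc : c ≤ log (2 * (1 - 2 * p * (1 - p)) / ((1 + L * s) * (1 - p)))) :
    L * s - log 2 + c ≤ phi p := by
  have hT : L * s ≤ tau p := mul_le_mul hL hs hs0 (by linarith [le_neg_log_one_sub hp1])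
  rw [log_two_mul_div_mul (one_sub_two_mul_mul_one_sub_pos p) (by positivity) (by linarith)] at hc
  unfold phi
  linarith [sub_log_one_add_le_sub_log_one_add (by positivity) hT]

lemma phi_neg_at_0_1706 : phi 0.1706 < 0 := by
  have hL : -log (1 - 0.1706) ≤ (0.18706 : ℝ) :=
    (neg_log_one_sub_le_sum (by norm_num) (by norm_num) 7).trans
      (by norm_num [Finset.sum_range_succ])
  have hs : √(2 / 0.1706) ≤ (3.424 : ℝ) := (sqrt_le_left (by norm_num)).2 (by norm_num)
  have := phi_le (by norm_num) (by norm_num) hL hs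
    ((log_le_neg_sum_add (by norm_num) 4).trans
      (by norm_num [Finset.sum_range_succ] : _ ≤ (0.052536 : ℝ)))
  linarith [log_two_gt_d9]

lemma phi_pos_at_0_1716 : 0 < phi 0.1716 := by
  have hL : (0.18825 : ℝ) ≤ -log (1 - 0.1716) :=
    (by norm_num [Finset.sum_range_succ] : (0.18825 : ℝ) ≤ _).trans
      (sum_sub_le_neg_log_one_sub (by norm_num) (by norm_num) 7)
  have hs : (3.4139 : ℝ) ≤ √(2 / 0.1716) :=
    (le_sqrt (by norm_num) (by norm_num)).2 (by norm_num)
  have := le_phi (by norm_num) (by norm_num) (by norm_num) hL hs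
    ((by norm_num [Finset.sum_range_succ] : (0.05058 : ℝ) ≤ _).trans
      (neg_sum_sub_le_log (by norm_num) 4))
  linarith [log_two_lt_d9]

end Sterrett

open Sterrett in
theorem stmt_8 :
    ∀ g₀ : ℝ → ℝ,
      (∀ p, g₀ p = (1 / (1 - p)) * ((1 - 2 * p * (1 - p)) /
        ((1 - p) * (1 - Real.log (1 - p) * Real.sqrt (2 / p))))
        ^ (Real.sqrt (p / 2))) →
    ∃! pstar : ℝ, pstar ∈ Set.Ioo (0:ℝ) ((3 - Real.sqrt 5) / 2) ∧ g₀ pstar - 1 = 0 ∧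
      |pstar - 0.1711| < 0.0005 := by
  intro g₀ hg₀
  have hroot : ∀ p ∈ Ioo (0 : ℝ) 1, g₀ p - 1 = 0 ↔ phi p = 0 := fun p hp => by
    rw [hg₀, formula_eq_exp hp.1 hp.2, sub_eq_zero, exp_eq_one_iff, mul_eq_zero,
      or_iff_right (sqrt_pos.2 (half_pos hp.1)).ne']
  have hsqrt5 : √5 < 2.6568 := (sqrt_lt' (by norm_num)).2 (by norm_num)
  obtain ⟨c, ⟨hc₁, hc₂⟩, hc⟩ :=
    intermediate_value_Ioo (by norm_num : (0.1706 : ℝ) ≤ 0.1716)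
    (continuousOn_phi.mono (Icc_subset_Ioo (by norm_num) (by norm_num)))
    ⟨phi_neg_at_0_1706, phi_pos_at_0_1716⟩
  refine ⟨c, ⟨⟨by linarith, by linarith⟩, (hroot c ⟨by linarith, by linarith⟩).2 hc,
    abs_lt.2 ⟨by linarith, by linarith⟩⟩, ?_⟩
  rintro y ⟨-, hy, hy_near⟩
  obtain ⟨hy₁, hy₂⟩ := abs_lt.1 hy_near
  have hwindow : Icc (0.1706 : ℝ) 0.1716 ⊆ Icc (3 / 20) (1 / 2) :=
    Icc_subset_Icc (by norm_num) (by norm_num)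
  exact strictMonoOn_phi.injOn (hwindow ⟨by linarith, by linarith⟩)
    (hwindow ⟨hc₁.le, hc₂.le⟩)
    (((hroot y ⟨by linarith, by linarith⟩).1 hy).trans hc.symm)
end

section
/- The function f(y) = (1/y - (5/2)y²)·ln(1-y²) + ln(1 + (1-y²)(1/y - (5/2)y²)) is strictly positive on the interval (0, √((3-√5)/2)). -/
/-!
Write `s = 1 - y²` and `a = 1/y - (5/2) y²`. Two classical rational bounds for the logarithm,
`log s ≥ (s - s⁻¹)/2` for `s ≤ 1` (this is `sinh (log s) ≤ log s`) and `log (1 + u) ≥ 2u/(u + 2)`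
for `u ≥ 0`, show that `a log s + log (1 + s a)` is positive as soon as
`(1 - s²)(s a + 2) < 4 s²`. In terms of `y` this is a polynomial inequality of degree 8, which
holds whenever `y² + y < 1`, that is, for `y` below `(√5 - 1)/2 = √((3 - √5)/2)`.
-/

open Real

theorem half_sub_inv_le_log {s : ℝ} (hs₀ : 0 < s) (hs₁ : s ≤ 1) : (s - s⁻¹) / 2 ≤ log s := by
  rw [← sinh_log hs₀]
  exact sinh_le_self_iff.2 (log_nonpos hs₀.le hs₁)

theorem mul_log_add_log_one_add_mul_pos {a s : ℝ} (ha : 0 < a) (hs₀ : 0 < s) (hs₁ : s ≤ 1)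
    (h : (1 - s ^ 2) * (s * a + 2) < 4 * s ^ 2) : 0 < a * log s + log (1 + s * a) := by
  have hsa : 0 < s * a := mul_pos hs₀ ha
  have hlower : 0 < a * ((s - s⁻¹) / 2) + 2 * (s * a) / (s * a + 2) := by
    have : a * ((s - s⁻¹) / 2) + 2 * (s * a) / (s * a + 2) =
        a * (4 * s ^ 2 - (1 - s ^ 2) * (s * a + 2)) / (2 * s * (s * a + 2)) := by
      field_simp
      ring
    rw [this]
    exact div_pos (mul_pos ha (sub_pos.2 h)) (by positivity)
  calc 0 < a * ((s - s⁻¹) / 2) + 2 * (s * a) / (s * a + 2) := hlower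
    _ ≤ a * log s + log (1 + s * a) :=
      add_le_add (mul_le_mul_of_nonneg_left (half_sub_inv_le_log hs₀ hs₁) ha.le)
        (le_log_one_add_of_nonneg hsa.le)

theorem sq_add_self_lt_one_of_lt_sqrt {y : ℝ} (hy₀ : 0 ≤ y) (hy : y < √((3 - √5) / 2)) :
    y ^ 2 + y < 1 := by
  have h5 : √5 ^ 2 = 5 := sq_sqrt (by norm_num)
  have hc : √((3 - √5) / 2) = (√5 - 1) / 2 := by
    rw [show (3 - √5) / 2 = ((√5 - 1) / 2) ^ 2 by linear_combination (-1 / 4 : ℝ) * h5]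
    exact sqrt_sq (by nlinarith [sqrt_nonneg 5])
  rw [hc] at hy
  nlinarith

theorem polynomial_lt_of_sq_add_self_lt_one {y : ℝ} (hy₀ : 0 < y) (hy : y ^ 2 + y < 1) :
    y * (2 - y ^ 2) * ((1 - y ^ 2) * (2 - 5 * y ^ 3) + 4 * y) < 8 * (1 - y ^ 2) ^ 2 := by
  have ht : 0 < 1 - y - y ^ 2 := by linarith
  have hy' : y < 31 / 50 := by nlinarith
  have hq : 0 < 8 - 19 * y + 10 * y ^ 2 := by nlinarith
  have hr : 0 ≤ 15 * y - 19 * y ^ 2 + 2 * y ^ 3 + 5 * y ^ 4 + 5 * y ^ 5 - 5 * y ^ 6 := by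
    nlinarith [pow_pos hy₀ 3, pow_pos hy₀ 4, pow_pos hy₀ 5, pow_pos hy₀ 6]
  -- the gap is exactly `(8 - 19y + 10y²) + r(y) · (1 - y - y²)`, with `r` the polynomial of `hr`
  linear_combination hq + mul_nonneg hr ht.le

theorem stmt_10 (y : ℝ) (hy : y ∈ Set.Ioo (0:ℝ) (Real.sqrt ((3 - Real.sqrt 5) / 2))) :
    0 < (1 / y - (5 / 2) * y ^ 2) * Real.log (1 - y ^ 2) +
      Real.log (1 + (1 - y ^ 2) * (1 / y - (5 / 2) * y ^ 2)) := by
  obtain ⟨hy₀, hyc⟩ := hy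
  have hy : y ^ 2 + y < 1 := sq_add_self_lt_one_of_lt_sqrt hy₀.le hyc
  have ha : 0 < 1 / y - (5 / 2) * y ^ 2 := by
    rw [show 1 / y - (5 / 2) * y ^ 2 = (2 - 5 * y ^ 3) / (2 * y) by field_simp]
    exact div_pos (by nlinarith) (by positivity)
  refine mul_log_add_log_one_add_mul_pos ha (by nlinarith) (by nlinarith) ?_
  have hpoly := polynomial_lt_of_sq_add_self_lt_one hy₀ hy
  have hcond : (1 - (1 - y ^ 2) ^ 2) * ((1 - y ^ 2) * (1 / y - 5 / 2 * y ^ 2) + 2) =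
      y * (2 - y ^ 2) * ((1 - y ^ 2) * (2 - 5 * y ^ 3) + 4 * y) / 2 := by
    field_simp
    ring
  rw [hcond]
  linarith
end

section
/- For every p ∈ (0, (3-√5)/2), the point N(p) = 1/√p + 1 - (5/2)p satisfies t^(D)(N(p), p) < 1, where t^(D)(N,p) = 1 - q^N + (1 - p·q^(N-1))/N and q = 1-p. -/
/-!
Write `s = √p`, `q = 1 - p` and `M = N - 1`, so that `M s = 1 - (5/2) s³`. Clearing the
denominator `N`, the claim becomes `1 < q ^ M * (1 + M q)`. Bernoulli's inequality bounds `q ^ M`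
from below by `1 - M p` when `M ≥ 1`, and (applied to `q ^ (1 - M)`) by `q / (1 - (1 - M) p)`
when `M ≤ 1`; in either case what remains is a polynomial inequality in `s`, valid whenever
`s² + s < 1`, i.e. `p < (3 - √5)/2`.
-/

open Real

lemma dorfman_lt_one_of_one_lt {p q N : ℝ} (hq : 0 < q) (hN : 0 < N)
    (h : 1 < q ^ (N - 1) * (p + N * q)) :
    1 - q ^ N + (1 - p * q ^ (N - 1)) / N < 1 := by
  have hsplit : q ^ N = q ^ (N - 1) * q := by
    rw [← rpow_add_one hq.ne', sub_add_cancel]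
  have : (1 - p * q ^ (N - 1)) / N < q ^ N := by
    rw [div_lt_iff₀ hN, hsplit]
    linarith
  linarith

lemma one_sub_mul_le_one_sub_rpow {p M : ℝ} (hp : p ≤ 1) (hM : 1 ≤ M) :
    1 - M * p ≤ (1 - p) ^ M := by
  simpa [sub_eq_add_neg] using one_add_mul_self_le_rpow_one_add (s := -p) (by linarith) hM

lemma one_sub_div_le_one_sub_rpow {p M : ℝ} (hp : p < 1) (hM0 : 0 ≤ M) (hM1 : M ≤ 1) :
    (1 - p) / (1 - (1 - M) * p) ≤ (1 - p) ^ M := by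
  have hq : 0 < 1 - p := by linarith
  have hD : 0 < 1 - (1 - M) * p := by
    rcases le_total 0 p with h | h <;> nlinarith
  have hbern : (1 - p) ^ (1 - M) ≤ 1 - (1 - M) * p := by
    simpa [sub_eq_add_neg] using
      rpow_one_add_le_one_add_mul_self (s := -p) (by linarith) (by linarith) (by linarith)
  rw [div_le_iff₀ hD]
  calc 1 - p = (1 - p) ^ M * (1 - p) ^ (1 - M) := by
        rw [← rpow_add hq, add_sub_cancel, rpow_one]
    _ ≤ (1 - p) ^ M * (1 - (1 - M) * p) := by gcongr

section PolynomialBounds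

variable {s M : ℝ} (hs0 : 0 < s) (hs : s ^ 2 + s < 1) (hM : M * s = 1 - 5 / 2 * s ^ 3)
include hs0 hs hM

lemma pos_of_mul_eq_one_sub_cube : 0 < M := by
  by_contra! h
  nlinarith [mul_nonpos_of_nonpos_of_nonneg h hs0.le, sq_nonneg (s - 1 / 2)]

lemma one_sub_mul_lt_of_mul_eq_one_sub_cube :
    1 - (1 - M) * s ^ 2 < (1 - s ^ 2) * (1 + M * (1 - s ^ 2)) := by
  have h1 : 0 < 1 - s - s ^ 2 := by linarith
  have hQ : 0 < 1 + s - s ^ 2 - 5 / 2 * s ^ 3 - 5 / 2 * s ^ 4 + 5 / 2 * s ^ 5 := by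
    nlinarith [mul_pos hs0 hs0, mul_pos (mul_pos hs0 hs0) hs0, sq_nonneg (s - 1 / 2),
      mul_pos h1 hs0, mul_pos (mul_pos h1 hs0) hs0]
  have hfactor : s * ((1 - s ^ 2) * (1 + M * (1 - s ^ 2)) - (1 - (1 - M) * s ^ 2)) =
      (1 - s - s ^ 2) * (1 + s - s ^ 2 - 5 / 2 * s ^ 3 - 5 / 2 * s ^ 4 + 5 / 2 * s ^ 5) := by
    linear_combination ((1 - s ^ 2) ^ 2 - s ^ 2) * hM
  nlinarith [mul_pos h1 hQ]

lemma pos_sub_mul_of_mul_eq_one_sub_cube : 0 < 1 - 2 * s ^ 2 - M * s ^ 2 * (1 - s ^ 2) := by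
  have hR : 0 < s - s ^ 2 - 2 * s ^ 3 + s ^ 4 + 5 / 2 * s ^ 5 - 5 / 2 * s ^ 7 := by
    have hcube : s ^ 3 ≤ s - s ^ 2 := by nlinarith
    nlinarith [mul_pos hs0 hs0, sq_nonneg (s - 1 / 2), mul_pos (mul_pos hs0 hs0) hs0,
      sq_nonneg (s ^ 2 - s), mul_pos hs0 (mul_pos hs0 (mul_pos hs0 hs0))]
  have hfactor : s * (1 - 2 * s ^ 2 - M * s ^ 2 * (1 - s ^ 2)) =
      s - s ^ 2 - 2 * s ^ 3 + s ^ 4 + 5 / 2 * s ^ 5 - 5 / 2 * s ^ 7 := by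
    linear_combination (-(s ^ 2 * (1 - s ^ 2))) * hM
  nlinarith

theorem one_lt_rpow_mul_of_mul_eq_one_sub_cube :
    1 < (1 - s ^ 2) ^ M * (1 + M * (1 - s ^ 2)) := by
  have hM0 := pos_of_mul_eq_one_sub_cube hs0 hs hM
  have hs2 : s ^ 2 < 1 := by nlinarith
  have hfac : 0 ≤ 1 + M * (1 - s ^ 2) := by nlinarith
  rcases le_total M 1 with hM1 | hM1
  · have hD : 0 < 1 - (1 - M) * s ^ 2 := by nlinarith
    calc 1 < (1 - s ^ 2) * (1 + M * (1 - s ^ 2)) / (1 - (1 - M) * s ^ 2) :=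
          (one_lt_div hD).2 (one_sub_mul_lt_of_mul_eq_one_sub_cube hs0 hs hM)
      _ = (1 - s ^ 2) / (1 - (1 - M) * s ^ 2) * (1 + M * (1 - s ^ 2)) :=
          (div_mul_eq_mul_div ..).symm
      _ ≤ (1 - s ^ 2) ^ M * (1 + M * (1 - s ^ 2)) := by
          gcongr
          exact one_sub_div_le_one_sub_rpow hs2 hM0.le hM1
  · calc 1 < 1 + M * (1 - 2 * s ^ 2 - M * s ^ 2 * (1 - s ^ 2)) :=
          lt_add_of_pos_right _ (mul_pos hM0 (pos_sub_mul_of_mul_eq_one_sub_cube hs0 hs hM))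
      _ = (1 - M * s ^ 2) * (1 + M * (1 - s ^ 2)) := by ring
      _ ≤ (1 - s ^ 2) ^ M * (1 + M * (1 - s ^ 2)) := by
          gcongr
          exact one_sub_mul_le_one_sub_rpow hs2.le hM1

end PolynomialBounds

lemma sq_sqrt_add_sqrt_lt_one {p : ℝ} (hp0 : 0 ≤ p) (hp : p < (3 - √5) / 2) :
    √p ^ 2 + √p < 1 := by
  have h5 : √5 ^ 2 = 5 := sq_sqrt (by norm_num)
  have hsq : √p ^ 2 = p := sq_sqrt hp0
  nlinarith [sq_nonneg (2 * √p + 1 - √5), sqrt_nonneg p, sqrt_nonneg 5]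

theorem stmt_11 (p : ℝ) (hp : p ∈ Set.Ioo (0:ℝ) ((3 - Real.sqrt 5) / 2)) :
    ∀ q : ℝ, q = 1 - p →
    ∀ N : ℝ, N = 1 / Real.sqrt p + 1 - (5 / 2) * p →
    1 - q ^ N + (1 - p * q ^ (N - 1)) / N < 1 := by
  rintro q rfl N hN
  obtain ⟨hp0, hp1⟩ := hp
  have hs0 : 0 < √p := sqrt_pos.mpr hp0
  have hs := sq_sqrt_add_sqrt_lt_one hp0.le hp1
  have hsq : √p ^ 2 = p := sq_sqrt hp0.le
  have hM : (N - 1) * √p = 1 - 5 / 2 * √p ^ 3 := by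
    rw [hN]; field_simp; linear_combination 5 * √p * hsq
  have hM0 := pos_of_mul_eq_one_sub_cube hs0 hs hM
  have key := one_lt_rpow_mul_of_mul_eq_one_sub_cube hs0 hs hM
  rw [hsq] at key
  refine dorfman_lt_one_of_one_lt (by linarith) (by linarith) ?_
  convert key using 2
  ring
end

section
/- For every p ∈ (0, (3-√5)/2), there exists N ∈ (1/√p - p, 1/√p + 1 - (5/2)p) such that ∂/∂N t^(D)(N,p) = 0, where t^(D)(N,p) = 1 - (1-p)^N + (1 - p(1-p)^(N-1))/N. -/
/-!
With `q = 1 - p` and `μ = -log q`, the derivative of `t^(D)(·, p)` at `N` is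
`(q^(N-1) (p + μ N (q N + p)) - 1) / N²`, which is negative exactly when
`p + μ N (q N + p) < exp ((N - 1) μ)`. Write `p = s²`; the hypothesis on `p` gives `s ≤ 5/8`.
At the two endpoints this comparison is decided using only
`p + p²/2 + p³/3 ≤ μ ≤ p + p²/2 + p³/3 + p⁴/q` and the quadratic Taylor bounds of `exp`:
after clearing denominators each side condition becomes the positivity of an explicit
polynomial in `s`, whose Bernstein coefficients on `[0, 5/8]` are all positive.
Darboux's theorem then gives a zero of the derivative between the endpoints.
-/

open Real Set

noncomputable def dorfmanTestsPerItem (p x : ℝ) : ℝ :=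
  1 - (1 - p) ^ x + (1 - p * (1 - p) ^ (x - 1)) / x

lemma hasDerivAt_dorfmanTestsPerItem {p x : ℝ} (hp : 0 < 1 - p) (hx : x ≠ 0) :
    HasDerivAt (dorfmanTestsPerItem p)
      (((1 - p) ^ (x - 1) * (p + -log (1 - p) * x * ((1 - p) * x + p)) - 1) / x ^ 2) x := by
  have hpow := (hasDerivAt_id x).const_rpow hp
  have hpow' := ((hasDerivAt_id x).sub_const 1).const_rpow hp
  refine ((hpow.const_sub 1).add
    (((hpow'.const_mul p).const_sub 1).div (hasDerivAt_id x) hx)).congr_deriv ?_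
  rw [id, show (1 - p) ^ x = (1 - p) ^ (x - 1) * (1 - p) by rw [← rpow_add_one hp.ne']; ring_nf]
  field_simp
  ring

lemma one_sub_rpow_sub_one {p x : ℝ} (hp : 0 < 1 - p) :
    (1 - p) ^ (x - 1) = (exp ((x - 1) * -log (1 - p)))⁻¹ := by
  rw [rpow_def_of_pos hp, ← exp_neg]
  ring_nf

lemma dorfman_slope_neg {p x : ℝ} (hp : 0 < 1 - p) (hx : x ≠ 0)
    (h : p + -log (1 - p) * x * ((1 - p) * x + p) < exp ((x - 1) * -log (1 - p))) :
    ((1 - p) ^ (x - 1) * (p + -log (1 - p) * x * ((1 - p) * x + p)) - 1) / x ^ 2 < 0 := by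
  refine div_neg_of_neg_of_pos ?_ (by positivity)
  rwa [one_sub_rpow_sub_one hp, sub_neg, inv_mul_lt_iff₀ (exp_pos _), mul_one]

lemma dorfman_slope_pos {p x : ℝ} (hp : 0 < 1 - p) (hx : x ≠ 0)
    (h : exp ((x - 1) * -log (1 - p)) < p + -log (1 - p) * x * ((1 - p) * x + p)) :
    0 < ((1 - p) ^ (x - 1) * (p + -log (1 - p) * x * ((1 - p) * x + p)) - 1) / x ^ 2 := by
  refine div_pos ?_ (by positivity)
  rwa [one_sub_rpow_sub_one hp, sub_pos, lt_inv_mul_iff₀ (exp_pos _), mul_one]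

lemma sum_range_pow_div_le_neg_log_one_sub {x : ℝ} (h0 : 0 ≤ x) (h1 : x < 1) (n : ℕ) :
    ∑ i ∈ Finset.range n, x ^ (i + 1) / (i + 1) ≤ -log (1 - x) :=
  sum_le_hasSum _ (fun i _ => by positivity)
    (hasSum_pow_div_log_of_abs_lt_one (by rwa [abs_of_nonneg h0]))

lemma neg_log_one_sub_le_sum_range_add {x : ℝ} (h0 : 0 ≤ x) (h1 : x < 1) (n : ℕ) :
    -log (1 - x) ≤ ∑ i ∈ Finset.range n, x ^ (i + 1) / (i + 1) + x ^ (n + 1) / (1 - x) := by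
  have h := abs_log_sub_add_sum_range_le (x := x) (by rwa [abs_of_nonneg h0]) n
  rw [abs_of_nonneg h0] at h
  linarith [(abs_le.1 h).1]

lemma exp_le_one_add_add_sq {y : ℝ} (h0 : 0 ≤ y) (h1 : y ≤ 1) : exp y ≤ 1 + y + 3 / 4 * y ^ 2 := by
  have h := exp_bound' h0 h1 (n := 2) (by norm_num)
  norm_num [Finset.sum_range_succ] at h
  linarith

lemma pow_mul_sub_pow_nonneg {s r : ℝ} (h0 : 0 ≤ s) (h1 : s ≤ r) (k n : ℕ) :
    0 ≤ s ^ k * (r - s) ^ n :=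
  mul_nonneg (pow_nonneg h0 k) (pow_nonneg (sub_nonneg.2 h1) n)

lemma left_endpoint_poly_pos {s : ℝ} (hs : 0 < s) (hs' : s ≤ 5 / 8) :
    0 < 1 - s - 1/2*s^2 + 2/3*s^3 - 11/3*s^4 + 19/24*s^5 + 7/12*s^6 + 7/3*s^7 + 5/3*s^8
      - 47/72*s^9 - 19/36*s^10 - 23/24*s^11 + 1/3*s^12 + 7/72*s^13 + 1/9*s^14 - 2/9*s^15
      - 1/18*s^17 := by
  have B := pow_mul_sub_pow_nonneg hs.le hs'
  linarith [pow_pos hs 17, B 0 17, B 1 16, B 2 15, B 3 14, B 4 13, B 5 12, B 6 11, B 7 10, B 8 9,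
    B 9 8, B 10 7, B 11 6, B 12 5, B 13 4, B 14 3, B 15 2, B 16 1]

lemma right_endpoint_poly_pos {s : ℝ} (hs : 0 < s) (hs' : s ≤ 5 / 8) :
    0 < 1 + 3/4*s - 15/2*s^2 - 53/12*s^3 + 217/12*s^4 + 643/48*s^5 - 173/12*s^6 - 411/16*s^7
      + 59/16*s^8 + 163/8*s^9 + 67/24*s^10 - 1213/192*s^11 - 35/48*s^12 - 109/32*s^13
      - 5/6*s^14 + 175/192*s^15 + 5/3*s^16 + 25/24*s^17 - 25/12*s^19 := by
  have B := pow_mul_sub_pow_nonneg hs.le hs'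
  linarith [pow_pos hs 19, B 0 19, B 1 18, B 2 17, B 3 16, B 4 15, B 5 14, B 6 13, B 7 12,
    B 8 11, B 9 10, B 10 9, B 11 8, B 12 7, B 13 6, B 14 5, B 15 4, B 16 3, B 17 2, B 18 1]

lemma right_exponent_poly_pos {s : ℝ} (hs : 0 < s) (hs' : s ≤ 5 / 8) :
    0 < 1 - s - s^2 + 1/2*s^3 + 5/2*s^4 + 1/6*s^5 - 5/4*s^6 - 2/3*s^7 - 5/12*s^8 + 5/3*s^10 := by
  have B := pow_mul_sub_pow_nonneg hs.le hs'
  linarith [pow_pos hs 10, B 0 10, B 1 9, B 2 8, B 3 7, B 4 6, B 5 5, B 6 4, B 7 3, B 8 2, B 9 1]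

lemma lt_exp_at_left {s μ : ℝ} (hs : 0 < s) (hs' : s ≤ 5 / 8) (hL : s^2 + s^4/2 + s^6/3 ≤ μ)
    (hU : μ ≤ s^2 + s^4/2 + s^6/3 + s^8/(1 - s^2)) :
    s^2 + μ * (1/s - s^2) * ((1 - s^2) * (1/s - s^2) + s^2) < exp ((1/s - s^2 - 1) * μ) := by
  have hq : 0 < 1 - s^2 := by nlinarith
  have hinv : 8/5 ≤ 1/s := by rw [le_div_iff₀ hs]; linarith
  have ha : 0 < 1/s - s^2 - 1 := by nlinarith
  have hK : 0 < (1 - s^2) * (1/s - s^2) + s^2 := add_pos (mul_pos hq (by linarith)) (by positivity)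
  have key : 1 + (1/s - s^2 - 1) * (s^2 + s^4/2 + s^6/3)
        + ((1/s - s^2 - 1) * (s^2 + s^4/2 + s^6/3)) ^ 2 / 2
        - (s^2 + (s^2 + s^4/2 + s^6/3 + s^8/(1 - s^2)) * (1/s - s^2)
          * ((1 - s^2) * (1/s - s^2) + s^2))
      = s * (1 - s - 1/2*s^2 + 2/3*s^3 - 11/3*s^4 + 19/24*s^5 + 7/12*s^6 + 7/3*s^7 + 5/3*s^8
          - 47/72*s^9 - 19/36*s^10 - 23/24*s^11 + 1/3*s^12 + 7/72*s^13 + 1/9*s^14 - 2/9*s^15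
          - 1/18*s^17) / (1 - s^2) := by
    field_simp
    ring
  calc _ ≤ s^2 + (s^2 + s^4/2 + s^6/3 + s^8/(1 - s^2)) * (1/s - s^2)
          * ((1 - s^2) * (1/s - s^2) + s^2) := by gcongr; linarith
    _ < 1 + (1/s - s^2 - 1) * (s^2 + s^4/2 + s^6/3)
        + ((1/s - s^2 - 1) * (s^2 + s^4/2 + s^6/3)) ^ 2 / 2 := by
      rw [← sub_pos, key]
      exact div_pos (mul_pos hs (left_endpoint_poly_pos hs hs')) hq
    _ ≤ exp ((1/s - s^2 - 1) * (s^2 + s^4/2 + s^6/3)) := quadratic_le_exp_of_nonneg (by positivity)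
    _ ≤ exp ((1/s - s^2 - 1) * μ) := by gcongr

lemma exp_lt_at_right {s μ : ℝ} (hs : 0 < s) (hs' : s ≤ 5 / 8) (hL : s^2 + s^4/2 + s^6/3 ≤ μ)
    (hU : μ ≤ s^2 + s^4/2 + s^6/3 + s^8/(1 - s^2)) :
    exp ((1/s + 1 - 5/2*s^2 - 1) * μ)
      < s^2 + μ * (1/s + 1 - 5/2*s^2) * ((1 - s^2) * (1/s + 1 - 5/2*s^2) + s^2) := by
  have hq : 0 < 1 - s^2 := by nlinarith
  have hinv : 8/5 ≤ 1/s := by rw [le_div_iff₀ hs]; linarith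
  have hb : 0 < 1/s + 1 - 5/2*s^2 - 1 := by nlinarith
  have hK : 0 < (1 - s^2) * (1/s + 1 - 5/2*s^2) + s^2 :=
    add_pos (mul_pos hq (by linarith)) (by positivity)
  set X := (1/s + 1 - 5/2*s^2 - 1) * (s^2 + s^4/2 + s^6/3 + s^8/(1 - s^2)) with hX
  have hX1 : 1 - X = (1 - s - s^2 + 1/2*s^3 + 5/2*s^4 + 1/6*s^5 - 5/4*s^6 - 2/3*s^7 - 5/12*s^8
      + 5/3*s^10) / (1 - s^2) := by
    rw [hX]
    field_simp
    ring
  have key : s^2 + (s^2 + s^4/2 + s^6/3) * (1/s + 1 - 5/2*s^2)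
        * ((1 - s^2) * (1/s + 1 - 5/2*s^2) + s^2) - (1 + X + 3/4 * X^2)
      = s * (1 + 3/4*s - 15/2*s^2 - 53/12*s^3 + 217/12*s^4 + 643/48*s^5 - 173/12*s^6
          - 411/16*s^7 + 59/16*s^8 + 163/8*s^9 + 67/24*s^10 - 1213/192*s^11 - 35/48*s^12
          - 109/32*s^13 - 5/6*s^14 + 175/192*s^15 + 5/3*s^16 + 25/24*s^17 - 25/12*s^19)
        / (1 - s^2) ^ 2 := by
    rw [hX]
    field_simp
    ring
  calc _ ≤ exp X := by rw [hX]; gcongr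
    _ ≤ 1 + X + 3/4 * X^2 := by
      refine exp_le_one_add_add_sq (by positivity) ?_
      have := div_pos (right_exponent_poly_pos hs hs') hq
      linarith
    _ < s^2 + (s^2 + s^4/2 + s^6/3) * (1/s + 1 - 5/2*s^2)
        * ((1 - s^2) * (1/s + 1 - 5/2*s^2) + s^2) := by
      rw [← sub_pos, key]
      exact div_pos (mul_pos hs (right_endpoint_poly_pos hs hs')) (by positivity)
    _ ≤ _ := by gcongr; linarith

theorem stmt_13 (p : ℝ) (hp : p ∈ Set.Ioo (0:ℝ) ((3 - Real.sqrt 5) / 2)) :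
    ∃ N : ℝ, N ∈ Set.Ioo (1 / Real.sqrt p - p) (1 / Real.sqrt p + 1 - (5 / 2) * p) ∧
      deriv (fun x : ℝ =>
        1 - (1 - p) ^ x + (1 - p * (1 - p) ^ (x - 1)) / x) N = 0 := by
  obtain ⟨hp0, hp1⟩ := hp
  obtain ⟨s, hs, rfl⟩ : ∃ s, 0 < s ∧ s ^ 2 = p := ⟨√p, sqrt_pos.2 hp0, sq_sqrt hp0.le⟩
  rw [sqrt_sq hs.le]
  have hs' : s ≤ 5 / 8 := by
    have : 71 / 32 < √5 := by rw [lt_sqrt (by norm_num)]; norm_num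
    nlinarith
  have hq : 0 < 1 - s ^ 2 := by nlinarith
  have hinv : 8/5 ≤ 1/s := by rw [le_div_iff₀ hs]; linarith
  have hL := sum_range_pow_div_le_neg_log_one_sub (sq_nonneg s) (by linarith) 3
  have hU := neg_log_one_sub_le_sum_range_add (sq_nonneg s) (by linarith) 3
  norm_num [Finset.sum_range_succ, ← pow_mul] at hL hU
  set μ := -log (1 - s ^ 2)
  have hab : 1 / s - s ^ 2 ≤ 1 / s + 1 - 5 / 2 * s ^ 2 := by nlinarith
  have hderiv : ∀ x ∈ Icc (1 / s - s ^ 2) (1 / s + 1 - 5 / 2 * s ^ 2),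
      HasDerivAt (dorfmanTestsPerItem (s ^ 2))
        (((1 - s ^ 2) ^ (x - 1) * (s ^ 2 + μ * x * ((1 - s ^ 2) * x + s ^ 2)) - 1) / x ^ 2) x :=
    fun x hx => hasDerivAt_dorfmanTestsPerItem hq (by nlinarith [hx.1])
  obtain ⟨N, hN, hN0⟩ := exists_hasDerivWithinAt_eq_of_gt_of_lt hab
    (fun x hx => (hderiv x hx).hasDerivWithinAt)
    (dorfman_slope_neg hq (by nlinarith) (lt_exp_at_left hs hs' hL hU))
    (dorfman_slope_pos hq (by nlinarith) (exp_lt_at_right hs hs' hL hU))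
  exact ⟨N, hN, (hderiv N (Ioo_subset_Icc_self hN)).deriv.trans hN0⟩
end

section
/- For every p ∈ (0, (3-√5)/2), the integer N minimizing N ↦ t^(D)(N,p) = 1 - (1-p)^N + (1 - p(1-p)^(N-1))/N over positive integers lies in {⌊1/√p⌋, ⌊1/√p⌋ + 1}. -/
/-!
Write q = 1 - p and t = t^(D)(·, p). Then t(n+1) - t(n) = (g(n) - 1)/(n(n+1)) with
g(n) = p q^(n-1) (q n² + n + 1). For n < k = ⌊1/√p⌋ we have g(n) ≤ p (n+1)² ≤ 1, so t decreases
on [1, k]. Bernoulli's inequality q^k ≥ 1 - kp reduces g(k+1) ≥ 1 to a cubic inequality in √p,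
which holds exactly because √p + p < 1, i.e. p < (3 - √5)/2. Since n ↦ q n² + n + 1 is
log-concave, once g starts to decrease it keeps decreasing, so from k+1 on t first increases and
then decreases towards its limit 1 = t(1) ≥ t(k). Hence t attains its minimum at k or k+1.
-/

open Filter Topology

noncomputable section

def dorfman (p : ℝ) (N : ℕ) : ℝ := 1 - (1 - p) ^ N + (1 - p * (1 - p) ^ (N - 1)) / N

def dorfmanSlope (p : ℝ) (n : ℕ) : ℝ := p * (1 - p) ^ (n - 1) * ((1 - p) * n ^ 2 + n + 1)

end

-- `(3 - √5)/2 = ((√5 - 1)/2)²` and `(√5 - 1)/2` is the positive root of `s + s² = 1`.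
theorem sqrt_add_lt_one {p : ℝ} (hp : 0 ≤ p) (h : p < (3 - √5) / 2) : √p + p < 1 := by
  have h5 : √5 ^ 2 = 5 := Real.sq_sqrt (by norm_num)
  have hs : √p ^ 2 = p := Real.sq_sqrt hp
  have hlt : √p < (√5 - 1) / 2 :=
    (Real.sqrt_lt' (by nlinarith [Real.sqrt_nonneg 5])).2 (by nlinarith)
  nlinarith [Real.sqrt_nonneg p]

theorem dorfman_one (p : ℝ) : dorfman p 1 = 1 := by simp [dorfman]

theorem dorfman_succ_sub (p : ℝ) {n : ℕ} (hn : n ≠ 0) :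
    dorfman p (n + 1) - dorfman p n = (dorfmanSlope p n - 1) / (n * (n + 1)) := by
  obtain ⟨m, rfl⟩ := Nat.exists_eq_add_one_of_ne_zero hn
  simp only [dorfman, dorfmanSlope, Nat.add_sub_cancel, pow_succ]
  push_cast
  field_simp
  ring

theorem dorfman_succ_le (p : ℝ) {n : ℕ} (hn : n ≠ 0) (h : dorfmanSlope p n ≤ 1) :
    dorfman p (n + 1) ≤ dorfman p n :=
  sub_nonpos.1 <| (dorfman_succ_sub p hn).trans_le <|
    div_nonpos_of_nonpos_of_nonneg (by linarith) (by positivity)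

theorem le_dorfman_succ (p : ℝ) {n : ℕ} (hn : n ≠ 0) (h : 1 ≤ dorfmanSlope p n) :
    dorfman p n ≤ dorfman p (n + 1) :=
  sub_nonneg.1 <| (div_nonneg (by linarith) (by positivity)).trans_eq (dorfman_succ_sub p hn).symm

theorem tendsto_dorfman {p : ℝ} (hp : |1 - p| < 1) : Tendsto (dorfman p) atTop (𝓝 1) := by
  have hpow : Tendsto (fun N : ℕ ↦ (1 - p) ^ N) atTop (𝓝 0) :=
    tendsto_pow_atTop_nhds_zero_of_abs_lt_one hp
  have hfrac : Tendsto (fun N : ℕ ↦ (1 - p * (1 - p) ^ (N - 1)) / N) atTop (𝓝 0) :=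
    (tendsto_const_nhds.sub (tendsto_const_nhds.mul (hpow.comp (tendsto_sub_atTop_nat 1))))
      |>.div_atTop tendsto_natCast_atTop_atTop
  have := (tendsto_const_nhds (x := (1 : ℝ))).sub hpow |>.add hfrac
  rwa [sub_zero, add_zero] at this

theorem dorfmanSlope_le_one {p : ℝ} (hp0 : 0 ≤ p) (hp1 : p ≤ 1) {n : ℕ}
    (h : p * (n + 1) ^ 2 ≤ 1) :
    dorfmanSlope p n ≤ 1 := by
  have hq : (1 - p) ^ (n - 1) ≤ 1 := pow_le_one₀ (by linarith) (by linarith)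
  have hquad : 0 ≤ (1 - p) * n ^ 2 + n + 1 := by nlinarith
  calc dorfmanSlope p n = p * ((1 - p) * n ^ 2 + n + 1) * (1 - p) ^ (n - 1) := by
        unfold dorfmanSlope; ring
    _ ≤ p * ((1 - p) * n ^ 2 + n + 1) := mul_le_of_le_one_right (by positivity) hq
    _ ≤ p * (n + 1) ^ 2 := by gcongr; nlinarith
    _ ≤ 1 := h

-- For `s = √p` and `x = (k + 1)√p` this is the Bernoulli lower bound of `dorfmanSlope p (k + 1)`.
theorem one_le_cubic_of_add_sq_le_one {s x : ℝ} (hs : 0 ≤ s) (hs1 : s + s ^ 2 ≤ 1) (hx : 1 ≤ x)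
    (hx' : x ≤ 1 + s) :
    1 ≤ (1 + s ^ 2 - s * x) * ((1 - s ^ 2) * x ^ 2 + s * x + s ^ 2) := by
  obtain ⟨y, hy, rfl⟩ : ∃ y, 0 ≤ y ∧ x = 1 + y := ⟨x - 1, by linarith, by ring⟩
  have hys : y ≤ s := by linarith
  nlinarith [mul_nonneg hy (sub_nonneg.2 hys), mul_nonneg (mul_nonneg hy hy) (sub_nonneg.2 hys),
    mul_nonneg hy (sub_nonneg.2 hs1), pow_nonneg hs 3,
    mul_nonneg (mul_nonneg hy (sub_nonneg.2 hys)) hs]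

theorem one_le_dorfmanSlope_floor_add_one {p : ℝ} (hp : 0 < p) (h : √p + p ≤ 1) :
    1 ≤ dorfmanSlope p (⌊1 / √p⌋₊ + 1) := by
  set k := ⌊1 / √p⌋₊
  set s := √p
  have hs : 0 < s := Real.sqrt_pos.2 hp
  have hs2 : s ^ 2 = p := Real.sq_sqrt hp.le
  have hks : k * s ≤ 1 := (le_div_iff₀ hs).1 (Nat.floor_le (by positivity))
  have hks' : 1 < (k + 1) * s := (div_lt_iff₀ hs).1 (Nat.lt_floor_add_one _)
  calc 1 ≤ (1 + s ^ 2 - s * ((k + 1) * s)) *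
        ((1 - s ^ 2) * ((k + 1) * s) ^ 2 + s * ((k + 1) * s) + s ^ 2) :=
        one_le_cubic_of_add_sq_le_one hs.le (by rw [hs2]; exact h) hks'.le (by linarith)
    _ = (1 + k * (-p)) * (p * ((1 - p) * (k + 1) ^ 2 + (k + 1) + 1)) := by rw [← hs2]; ring
    _ ≤ (1 + -p) ^ k * (p * ((1 - p) * (k + 1) ^ 2 + (k + 1) + 1)) := by
        have hq : 0 ≤ 1 - p := by linarith
        gcongr
        exact one_add_mul_le_pow (by linarith) k
    _ = dorfmanSlope p (k + 1) := by simp only [dorfmanSlope, Nat.add_sub_cancel]; push_cast; ring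

-- The gap between the two sides is `2 q² x² + 2 q x + 1 - 2 q - q²`.
theorem quadratic_shift_mul_le_sq {q x : ℝ} (hq : 0 ≤ q) (hx : 1 ≤ x) :
    (q * (x - 1) ^ 2 + (x - 1) + 1) * (q * (x + 1) ^ 2 + (x + 1) + 1) ≤
      (q * x ^ 2 + x + 1) ^ 2 := by
  nlinarith [mul_le_mul hx hx zero_le_one (by linarith), mul_nonneg hq (sub_nonneg.2 hx),
    sq_nonneg q]

theorem dorfmanSlope_succ_succ_le {p : ℝ} (hp0 : 0 < p) (hp1 : p < 1) {n : ℕ} (hn : n ≠ 0)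
    (h : dorfmanSlope p (n + 1) ≤ dorfmanSlope p n) :
    dorfmanSlope p (n + 2) ≤ dorfmanSlope p (n + 1) := by
  obtain ⟨m, rfl⟩ := Nat.exists_eq_add_one_of_ne_zero hn
  set q := 1 - p
  have hq : 0 < q := by simp only [q]; linarith
  set Q : ℝ → ℝ := fun x ↦ q * x ^ 2 + x + 1
  have hslope (j : ℕ) : dorfmanSlope p (m + 1 + j) = p * q ^ m * (q ^ j * Q (m + 1 + j)) := by
    simp only [dorfmanSlope, Q, show m + 1 + j - 1 = m + j by omega, pow_add]
    push_cast
    ring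
  have e0 := hslope 0
  have e1 := hslope 1
  have e2 := hslope 2
  simp only [add_zero, pow_zero, one_mul, pow_one, Nat.cast_zero, Nat.cast_one, Nat.cast_ofNat]
    at e0 e1 e2
  rw [e0, e1] at h
  rw [e1, e2]
  have h' : q * Q (m + 1 + 1) ≤ Q (m + 1) := le_of_mul_le_mul_left h (by positivity)
  have hQ : 0 < Q (m + 1) := by positivity
  have hlc : Q (m + 1) * Q (m + 1 + 2) ≤ Q (m + 1 + 1) ^ 2 := by
    convert quadratic_shift_mul_le_sq hq.le (x := (m : ℝ) + 2)
      (by linarith [m.cast_nonneg (α := ℝ)]) using 2 <;> simp only [Q] <;> ring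
  refine mul_le_mul_of_nonneg_left ?_ (by positivity)
  rw [pow_two, mul_assoc]
  refine mul_le_mul_of_nonneg_left ?_ hq.le
  refine le_of_mul_le_mul_left ?_ hQ
  nlinarith [mul_le_mul_of_nonneg_left h' (by positivity : 0 ≤ Q (m + 1 + 1))]

theorem dorfman_antitoneOn {p : ℝ} (hp0 : 0 < p) (hp1 : p ≤ 1) :
    AntitoneOn (dorfman p) (Set.Icc 1 ⌊1 / √p⌋₊) := by
  refine antitoneOn_of_succ_le Set.ordConnected_Icc fun n _ hn hn' ↦ ?_
  rw [Order.succ_eq_add_one] at hn' ⊢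
  refine dorfman_succ_le p (Nat.one_le_iff_ne_zero.1 hn.1) (dorfmanSlope_le_one hp0.le hp1 ?_)
  have hs : 0 < √p := Real.sqrt_pos.2 hp0
  have hle : ((n + 1 : ℕ) : ℝ) ≤ 1 / √p := (Nat.le_floor_iff (by positivity)).1 hn'.2
  rw [le_div_iff₀ hs] at hle
  push_cast at hle
  calc p * (n + 1) ^ 2 = ((n + 1) * √p) ^ 2 := by rw [mul_pow, Real.sq_sqrt hp0.le]; ring
    _ ≤ 1 := pow_le_one₀ (by positivity) hle

section Tail

variable {f u : ℕ → ℝ} {k : ℕ} {c L : ℝ}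

theorem succ_le_self_of_lt_threshold (hk : c ≤ u k)
    (hu : ∀ n ≥ k, u (n + 1) ≤ u n → u (n + 2) ≤ u (n + 1)) :
    ∀ n ≥ k, u n < c → u (n + 1) ≤ u n := by
  intro n hn
  induction n, hn using Nat.le_induction with
  | base => exact fun h ↦ absurd hk h.not_ge
  | succ n hn ih =>
    intro h
    refine hu n hn ?_
    by_cases hn' : u n < c
    · exact ih hn'
    · exact h.le.trans (not_lt.1 hn')

theorem lt_threshold_of_ge (hk : c ≤ u k) (hu : ∀ n ≥ k, u (n + 1) ≤ u n → u (n + 2) ≤ u (n + 1))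
    {j : ℕ} (hj : k ≤ j) (hlt : u j < c) : ∀ n ≥ j, u n < c := by
  intro n hn
  induction n, hn using Nat.le_induction with
  | base => exact hlt
  | succ n hn ih => exact (succ_le_self_of_lt_threshold hk hu n (hj.trans hn) ih).trans_lt ih

theorem min_le_of_tendsto_of_threshold (hf : Tendsto f atTop (𝓝 L)) (hk : c ≤ u k)
    (hu : ∀ n ≥ k, u (n + 1) ≤ u n → u (n + 2) ≤ u (n + 1))
    (hup : ∀ n ≥ k, c ≤ u n → f n ≤ f (n + 1)) (hdown : ∀ n ≥ k, u n ≤ c → f (n + 1) ≤ f n) :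
    ∀ M ≥ k, min (f k) L ≤ f M := by
  intro M hM
  induction M, hM using Nat.le_induction with
  | base => exact min_le_left _ _
  | succ M hM ih =>
    by_cases hc : c ≤ u M
    · exact ih.trans (hup M hM hc)
    · have hlt := lt_threshold_of_ge hk hu hM (not_le.1 hc)
      have hanti : Antitone fun n ↦ f (n + M) :=
        antitone_add_nat_of_succ_le fun n hn ↦ hdown n (hM.trans hn) (hlt n hn).le
      exact (min_le_right _ _).trans
        (hanti.le_of_tendsto (hf.comp (tendsto_add_atTop_nat M)) 1 |>.trans_eq (by rw [add_comm]))

end Tail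

theorem stmt_14 (p : ℝ) (hp : p ∈ Set.Ioo (0:ℝ) ((3 - Real.sqrt 5) / 2)) :
    ∀ tD : ℕ → ℝ,
      (∀ N, tD N = 1 - (1 - p) ^ N + (1 - p * (1 - p) ^ (N - 1)) / (N : ℝ)) →
    ∃ N : ℕ, 0 < N ∧ (∀ M : ℕ, 0 < M → tD N ≤ tD M) ∧
      (N = ⌊1 / Real.sqrt p⌋₊ ∨ N = ⌊1 / Real.sqrt p⌋₊ + 1) := by
  obtain ⟨hp0, hpc⟩ := hp
  intro tD htD
  obtain rfl : tD = dorfman p := funext htD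
  have hsp : √p + p < 1 := sqrt_add_lt_one hp0.le hpc
  have hs : 0 < √p := Real.sqrt_pos.2 hp0
  have hp1 : p < 1 := by linarith
  set k := ⌊1 / √p⌋₊
  have hk : 1 ≤ k := Nat.le_floor (by rw [Nat.cast_one, le_div_iff₀ hs]; linarith)
  have hfront : ∀ M, 0 < M → M ≤ k → dorfman p k ≤ dorfman p M := fun M hM hMk ↦
    dorfman_antitoneOn hp0 hp1.le ⟨hM, hMk⟩ ⟨hk, le_rfl⟩ hMk
  have hback : ∀ M ≥ k + 1, min (dorfman p (k + 1)) 1 ≤ dorfman p M :=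
    min_le_of_tendsto_of_threshold (tendsto_dorfman (abs_lt.2 ⟨by linarith, by linarith⟩))
      (one_le_dorfmanSlope_floor_add_one hp0 hsp.le)
      (fun n hn ↦ dorfmanSlope_succ_succ_le hp0 hp1 (by omega))
      (fun n hn ↦ le_dorfman_succ p (by omega)) (fun n hn ↦ dorfman_succ_le p (by omega))
  have hk1 : dorfman p k ≤ 1 := dorfman_one p ▸ hfront 1 one_pos hk
  have hmin : ∀ M, 0 < M → min (dorfman p k) (dorfman p (k + 1)) ≤ dorfman p M := by
    intro M hM
    rcases le_or_gt M k with hMk | hMk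
    · exact (min_le_left _ _).trans (hfront M hM hMk)
    · exact (le_min (min_le_right _ _) ((min_le_left _ _).trans hk1)).trans (hback M hMk)
  rcases le_total (dorfman p k) (dorfman p (k + 1)) with h | h
  · exact ⟨k, hk, fun M hM ↦ min_eq_left h ▸ hmin M hM, Or.inl rfl⟩
  · exact ⟨k + 1, k.succ_pos, fun M hM ↦ min_eq_right h ▸ hmin M hM, Or.inr rfl⟩
end

section
/- For every p ∈ (0, (3-√5)/2), the integer N minimizing N ↦ t^(S)(N,p) = 2 - (1-p) + (2(1-p) - (1 - (1-p)^(N+1))/p)/N over positive integers lies in {⌊√(2/p)⌋, ⌊√(2/p)⌋ + 1, ⌊√(2/p)⌋ + 2}. -/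
set_option maxHeartbeats 1000000

lemma bern_lower (p : ℝ) (hp0 : 0 ≤ p) (hp1 : p ≤ 1) (n : ℕ) :
    1 - n*p + n*(n-1)/2*p^2 - n*(n-1)*(n-2)/6*p^3 ≤ (1-p)^n := by
  induction n with
  | zero => norm_num
  | succ n ih =>
    have hq : (0:ℝ) ≤ 1 - p := by linarith
    have h1 : (1-p) * (1 - n*p + n*(n-1)/2*p^2 - n*(n-1)*(n-2)/6*p^3) ≤ (1-p)^(n+1) := by
      calc (1-p) * (1 - n*p + n*(n-1)/2*p^2 - n*(n-1)*(n-2)/6*p^3)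
          ≤ (1-p) * (1-p)^n := mul_le_mul_of_nonneg_left ih hq
        _ = (1-p)^(n+1) := by ring
    have hnnn : (0:ℝ) ≤ (n:ℝ)*((n:ℝ)-1)*((n:ℝ)-2) := by
      rcases n with _ | _ | k
      · norm_num
      · norm_num
      · have hk : (0:ℝ) ≤ (k:ℝ) := Nat.cast_nonneg k
        have h3 := mul_nonneg (mul_nonneg (by linarith : (0:ℝ) ≤ (k:ℝ)+2)
          (by linarith : (0:ℝ) ≤ (k:ℝ)+1)) hk
        push_cast; nlinarith [h3]
    have hp4 : (0:ℝ) ≤ p^4 := by positivity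
    push_cast
    push_cast at h1
    nlinarith [mul_nonneg hnnn hp4]

lemma bern_upper (p : ℝ) (hp0 : 0 ≤ p) (hp1 : p ≤ 1) (n : ℕ) :
    (1-p)^n ≤ 1 - n*p + n*(n-1)/2*p^2 := by
  induction n with
  | zero => norm_num
  | succ n ih =>
    have hq : (0:ℝ) ≤ 1 - p := by linarith
    have h1 : (1-p)^(n+1) ≤ (1-p) * (1 - n*p + n*(n-1)/2*p^2) := by
      calc (1-p)^(n+1) = (1-p) * (1-p)^n := by ring
        _ ≤ (1-p) * (1 - n*p + n*(n-1)/2*p^2) := mul_le_mul_of_nonneg_left ih hq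
    have hnn : (0:ℝ) ≤ (n:ℝ)*((n:ℝ)-1) := by
      rcases n with _ | k
      · norm_num
      · have hk : (0:ℝ) ≤ (k:ℝ) := Nat.cast_nonneg k
        push_cast; nlinarith
    have hp3 : (0:ℝ) ≤ p^3 := by positivity
    push_cast
    push_cast at h1
    nlinarith [mul_nonneg hnn hp3]

lemma keyB (m p : ℝ) (hm : 3 ≤ m) (hp : 0 < p) (h1 : m^2*p ≤ 2) (h2 : 2 ≤ (m+1)^2*p) :
    1 - 2*p*(1-p) < (1 - m*p + m*(m-1)/2*p^2 - m*(m-1)*(m-2)/6*p^3) * (1 + (m-1)*p) := by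
  nlinarith [sq_nonneg (m*p), sq_nonneg p, mul_pos hp hp, sq_nonneg (m^2*p-2), sq_nonneg (2-m*p),
    mul_nonneg (mul_nonneg hp.le hp.le) hp.le, sq_nonneg (m*p-1),
    mul_nonneg (sub_nonneg.2 h1) hp.le, mul_nonneg (sub_nonneg.2 h2) hp.le,
    mul_nonneg (mul_nonneg (sub_nonneg.2 h1) hp.le) hp.le,
    mul_nonneg (mul_nonneg (sub_nonneg.2 h2) hp.le) hp.le]

lemma keyA (y p : ℝ) (hp : 0 < p) (hy : 3*p ≤ y) (ha : 2*p ≤ y^2) (hb : (y-p)^2 ≤ 2*p) :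
    0 ≤ -p + 3*p^2 - p^3 + y^2/2 - y^3/2 + (3/2)*y*p - y^2*p - (5/2)*y*p^2 + y^3*p
      + y*p^3/2 + y^2*p^2/2 - y^3*p^2/2 + y*p^4/2 := by
  nlinarith [mul_nonneg (sub_nonneg.2 ha) hp.le, mul_nonneg (sub_nonneg.2 hb) hp.le,
    mul_nonneg (sub_nonneg.2 ha) (sub_nonneg.2 hy), mul_nonneg (sub_nonneg.2 hb) (sub_nonneg.2 hy),
    mul_nonneg (sub_nonneg.2 ha) (sub_nonneg.2 hb), sq_nonneg (y-p), sq_nonneg y, sq_nonneg p,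
    mul_nonneg (mul_nonneg (sub_nonneg.2 ha) hp.le) hp.le,
    mul_nonneg (mul_nonneg (sub_nonneg.2 hb) hp.le) hp.le,
    mul_pos hp hp, mul_nonneg (sub_nonneg.2 hy) hp.le]

lemma u_mono (p : ℝ) (hp0 : 0 < p) (hp1 : p < 1) :
    Monotone (fun N : ℕ => 1 - 2*p*(1-p) - (1-p)^(N+1)*(1 + (N:ℝ)*p)) := by
  apply monotone_nat_of_le_succ
  intro N
  have hNr : (0:ℝ) ≤ (N:ℝ) := Nat.cast_nonneg N
  have hkey : (1-p) * (1 + ((N:ℝ)+1)*p) ≤ 1 + (N:ℝ)*p := by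
    nlinarith [mul_nonneg hNr (sq_nonneg p), sq_nonneg p]
  have hpow : (0:ℝ) ≤ (1-p)^(N+1) := pow_nonneg (by linarith) _
  have h2 : (1-p)^(N+1+1) * (1 + ((N:ℕ)+1:ℕ) * p) ≤ (1-p)^(N+1) * (1 + (N:ℝ)*p) := by
    push_cast
    calc (1-p)^(N+1+1) * (1 + ((N:ℝ)+1) * p) = (1-p)^(N+1) * ((1-p) * (1 + ((N:ℝ)+1)*p)) := by
          ring
      _ ≤ (1-p)^(N+1) * (1 + (N:ℝ)*p) := mul_le_mul_of_nonneg_left hkey hpow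
  push_cast
  push_cast at h2
  linarith

theorem stmt_15 (p : ℝ) (hp : p ∈ Set.Ioo (0:ℝ) ((3 - Real.sqrt 5) / 2)) :
    ∀ tS : ℕ → ℝ,
      (∀ N, tS N = 2 - (1 - p) + (2 * (1 - p) - (1 - (1 - p) ^ (N + 1)) / p) / (N : ℝ)) →
    ∃ N : ℕ, 0 < N ∧ (∀ M : ℕ, 0 < M → tS N ≤ tS M) ∧
      (N = ⌊Real.sqrt (2 / p)⌋₊ ∨ N = ⌊Real.sqrt (2 / p)⌋₊ + 1 ∨
        N = ⌊Real.sqrt (2 / p)⌋₊ + 2) := by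
  intro tS htS
  obtain ⟨hp0, hpU⟩ := hp
  have h5 : Real.sqrt 5 ^ 2 = 5 := Real.sq_sqrt (by norm_num)
  have h5pos : (0:ℝ) ≤ Real.sqrt 5 := Real.sqrt_nonneg 5
  have hphalf : p < 1/2 := by nlinarith
  have hpoly : 0 < 1 - 3*p + p^2 := by nlinarith
  have hq0 : (0:ℝ) < 1 - p := by linarith
  obtain ⟨s, hsdef⟩ : ∃ s, s = Real.sqrt (2/p) := ⟨_, rfl⟩
  rw [show Real.sqrt (2/p) = s from hsdef.symm]
  obtain ⟨m, hmdef⟩ : ∃ m : ℕ, m = ⌊s⌋₊ := ⟨_, rfl⟩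
  rw [show ⌊s⌋₊ = m from hmdef.symm]
  have hs0 : 0 ≤ s := by rw [hsdef]; exact Real.sqrt_nonneg _
  have hs2 : s^2 = 2/p := by rw [hsdef]; exact Real.sq_sqrt (by positivity)
  have hs4 : 4 < s^2 := by rw [hs2, lt_div_iff₀ hp0]; linarith
  have hsge2 : (2:ℝ) < s := by nlinarith
  have hm2 : 2 ≤ m := hmdef ▸ Nat.le_floor (by exact_mod_cast hsge2.le)
  have hmle : (m:ℝ) ≤ s := by rw [hmdef]; exact Nat.floor_le hs0
  have hmlt : s < (m:ℝ) + 1 := by rw [hmdef]; exact Nat.lt_floor_add_one s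
  have hm2p : ((m:ℝ))^2 * p ≤ 2 := by
    have h1 : ((m:ℝ))^2 ≤ 2/p := by nlinarith
    calc ((m:ℝ))^2 * p ≤ (2/p) * p := mul_le_mul_of_nonneg_right h1 hp0.le
      _ = 2 := by field_simp
  have hm1p : 2 ≤ ((m:ℝ)+1)^2 * p := by
    have h1 : 2/p < ((m:ℝ)+1)^2 := by nlinarith
    have := (div_lt_iff₀ hp0).mp h1
    linarith
  -- difference formula
  have hdiff : ∀ N : ℕ, 1 ≤ N →
      tS (N+1) - tS N = (1 - 2*p*(1-p) - (1-p)^(N+1)*(1 + (N:ℝ)*p)) / (p * N * (N+1)) := by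
    intro N hN
    have hNr : (0:ℝ) < (N:ℝ) := by exact_mod_cast hN
    have hp' : p ≠ 0 := ne_of_gt hp0
    have h1 : (N:ℝ) ≠ 0 := ne_of_gt hNr
    have h2 : ((N:ℝ)+1) ≠ 0 := by positivity
    rw [htS, htS]
    push_cast
    field_simp
    ring
  -- step lemmas
  have hstep_neg : ∀ k : ℕ, 1 ≤ k → 1 - 2*p*(1-p) - (1-p)^(k+1)*(1 + (k:ℝ)*p) ≤ 0 →
      tS (k+1) ≤ tS k := by
    intro k hk hu
    have h := hdiff k hk
    have hkr : (0:ℝ) < (k:ℝ) := by exact_mod_cast hk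
    have hden : (0:ℝ) < p * k * (k+1) := by positivity
    nlinarith [div_nonpos_of_nonpos_of_nonneg hu hden.le]
  have hstep_pos : ∀ k : ℕ, 1 ≤ k → 0 ≤ 1 - 2*p*(1-p) - (1-p)^(k+1)*(1 + (k:ℝ)*p) →
      tS k ≤ tS (k+1) := by
    intro k hk hu
    have h := hdiff k hk
    have hkr : (0:ℝ) < (k:ℝ) := by exact_mod_cast hk
    have hden : (0:ℝ) < p * k * (k+1) := by positivity
    nlinarith [div_nonneg hu hden.le]
  -- monotonicity of u
  have humono : Monotone (fun N : ℕ => 1 - 2*p*(1-p) - (1-p)^(N+1)*(1 + (N:ℝ)*p)) :=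
    u_mono p hp0 (by linarith)
  -- B: u (m-1) < 0
  obtain ⟨j, hj⟩ : ∃ j, m = j + 1 := ⟨m - 1, by omega⟩
  have hj1 : 1 ≤ j := by omega
  have hB : 1 - 2*p*(1-p) - (1-p)^(j+1)*(1 + (j:ℝ)*p) < 0 := by
    have hjm : ((j:ℝ)) = (m:ℝ) - 1 := by
      have : (m:ℝ) = (j:ℝ) + 1 := by exact_mod_cast hj
      linarith
    rcases eq_or_lt_of_le hm2 with hm2' | hm3
    · -- m = 2, j = 1
      have hj1' : j = 1 := by omega
      rw [hj1']
      have hx : 1 - 2*p*(1-p) - (1-p)^(1+1)*(1 + ((1:ℕ):ℝ)*p) = -(p * (1 - 3*p + p^2)) := by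
        push_cast; ring
      rw [hx]
      exact neg_lt_zero.mpr (mul_pos hp0 hpoly)
    · -- m ≥ 3
      have hpowj : (1-p)^(j+1) = (1-p)^m := by rw [hj]
      rw [hpowj, hjm]
      have hm3r : (3:ℝ) ≤ (m:ℝ) := by exact_mod_cast hm3
      have hlow := bern_lower p hp0.le (by linarith) m
      have hmul : (0:ℝ) ≤ 1 + ((m:ℝ)-1)*p := by
        have h3 := mul_nonneg (by linarith : (0:ℝ) ≤ (m:ℝ)-1) hp0.le
        linarith
      have h1 : (1 - m*p + (m:ℝ)*((m:ℝ)-1)/2*p^2 - (m:ℝ)*((m:ℝ)-1)*((m:ℝ)-2)/6*p^3) *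
          (1 + ((m:ℝ)-1)*p) ≤ (1-p)^m * (1 + ((m:ℝ)-1)*p) :=
        mul_le_mul_of_nonneg_right hlow hmul
      have h2 := keyB (m:ℝ) p hm3r hp0 hm2p hm1p
      linarith only [h1, h2]
  -- A: u (m+2) ≥ 0
  have hA : 0 ≤ 1 - 2*p*(1-p) - (1-p)^(m+2+1)*(1 + ((m+2:ℕ):ℝ)*p) := by
    have hup := bern_upper p hp0.le (by linarith) (m+1)
    have hmul : (0:ℝ) ≤ (1-p)^2 * (1 + ((m:ℝ)+2)*p) := by positivity
    have hsplit : (1-p)^(m+2+1) = (1-p)^(m+1) * (1-p)^2 := by ring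
    have hM1 : ((m+1:ℕ):ℝ) = (m:ℝ) + 1 := by push_cast; ring
    rw [hM1] at hup
    have h1 : (1-p)^(m+1) * ((1-p)^2 * (1 + ((m:ℝ)+2)*p)) ≤
        (1 - ((m:ℝ)+1)*p + ((m:ℝ)+1)*((m:ℝ)+1-1)/2*p^2) * ((1-p)^2 * (1 + ((m:ℝ)+2)*p)) :=
      mul_le_mul_of_nonneg_right hup hmul
    obtain ⟨y, hydef⟩ : ∃ y : ℝ, y = ((m:ℝ)+1) * p := ⟨_, rfl⟩
    have hm2r : (2:ℝ) ≤ (m:ℝ) := by exact_mod_cast hm2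
    have hy : 3*p ≤ y := by
      rw [hydef]
      have h3 := mul_le_mul_of_nonneg_right (by linarith : (3:ℝ) ≤ (m:ℝ)+1) hp0.le
      linarith
    have ha : 2*p ≤ y^2 := by
      rw [hydef]
      have h3 := mul_le_mul_of_nonneg_right hm1p hp0.le
      have hI : (((m:ℝ)+1)*p)^2 = (((m:ℝ)+1)^2*p)*p := by ring
      linarith
    have hb : (y - p)^2 ≤ 2*p := by
      rw [hydef]
      have h3 := mul_le_mul_of_nonneg_right hm2p hp0.le
      have hI : (((m:ℝ)+1)*p - p)^2 = ((m:ℝ)^2*p)*p := by ring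
      linarith
    have hkey := keyA y p hp0 hy ha hb
    have hid : (1 - 2*p*(1-p)) -
        (1 - ((m:ℝ)+1)*p + ((m:ℝ)+1)*((m:ℝ)+1-1)/2*p^2) * ((1-p)^2 * (1 + ((m:ℝ)+2)*p)) =
        -p + 3*p^2 - p^3 + y^2/2 - y^3/2 + (3/2)*y*p - y^2*p - (5/2)*y*p^2 + y^3*p
          + y*p^3/2 + y^2*p^2/2 - y^3*p^2/2 + y*p^4/2 := by
      rw [hydef]; ring
    have h1' : (1-p)^(m+1) * (1-p)^2 * (1 + ((m:ℝ)+2)*p) ≤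
        (1 - ((m:ℝ)+1)*p + ((m:ℝ)+1)*((m:ℝ)+1-1)/2*p^2) * ((1-p)^2 * (1 + ((m:ℝ)+2)*p)) := by
      calc (1-p)^(m+1) * (1-p)^2 * (1 + ((m:ℝ)+2)*p)
          = (1-p)^(m+1) * ((1-p)^2 * (1 + ((m:ℝ)+2)*p)) := by ring
        _ ≤ _ := h1
    have hcast : ((m+2:ℕ):ℝ) = (m:ℝ) + 2 := by push_cast; ring
    rw [hcast, hsplit]
    linarith [h1', hkey, hid]
  -- decreasing part: for 1 ≤ k ≤ m, tS m ≤ tS k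
  have key1 : ∀ d k : ℕ, 1 ≤ k → k + d = m → tS m ≤ tS k := by
    intro d
    induction d with
    | zero =>
      intro k hk1 hkm
      have hkm' : k = m := by omega
      rw [hkm']
    | succ d ih =>
      intro k hk1 hkm
      have hkj : k ≤ j := by omega
      have hu : 1 - 2*p*(1-p) - (1-p)^(k+1)*(1 + (k:ℝ)*p) ≤ 0 :=
        le_of_lt (lt_of_le_of_lt (humono hkj) hB)
      have h1 : tS (k+1) ≤ tS k := hstep_neg k hk1 hu
      have h2 : tS m ≤ tS (k+1) := ih (k+1) (by omega) (by omega)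
      linarith
  -- increasing part: tS (m+2) ≤ tS (m+2+d)
  have key2 : ∀ d : ℕ, tS (m+2) ≤ tS (m+2+d) := by
    intro d
    induction d with
    | zero => rfl
    | succ d ih =>
      have hle : m+2 ≤ m+2+d := by omega
      have hu : 0 ≤ 1 - 2*p*(1-p) - (1-p)^((m+2+d)+1)*(1 + ((m+2+d:ℕ):ℝ)*p) :=
        le_trans hA (humono hle)
      have h1 : tS (m+2+d) ≤ tS (m+2+d+1) := hstep_pos (m+2+d) (by omega) hu
      have : m+2+(d+1) = (m+2+d)+1 := by omega
      rw [this]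
      linarith
  -- choose the minimizer among m, m+1, m+2
  obtain ⟨N, hNmem, hN0, hN1, hN2⟩ : ∃ N, (N = m ∨ N = m+1 ∨ N = m+2) ∧
      tS N ≤ tS m ∧ tS N ≤ tS (m+1) ∧ tS N ≤ tS (m+2) := by
    rcases le_total (tS m) (tS (m+1)) with h1 | h1
    · rcases le_total (tS m) (tS (m+2)) with h2 | h2
      · exact ⟨m, Or.inl rfl, le_refl _, h1, h2⟩
      · exact ⟨m+2, Or.inr (Or.inr rfl), h2, le_trans h2 h1, le_refl _⟩
    · rcases le_total (tS (m+1)) (tS (m+2)) with h2 | h2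
      · exact ⟨m+1, Or.inr (Or.inl rfl), h1, le_refl _, h2⟩
      · exact ⟨m+2, Or.inr (Or.inr rfl), le_trans h2 h1, h2, le_refl _⟩
  refine ⟨N, by omega, ?_, hNmem⟩
  intro M hM
  rcases le_or_gt M m with hMm | hMm
  · have := key1 (m - M) M hM (by omega)
    linarith
  · have hM' : M = m+1 ∨ M = m+2 ∨ m+3 ≤ M := by omega
    rcases hM' with rfl | rfl | hM3
    · exact hN1
    · exact hN2
    · have := key2 (M - (m+2))
      have hEq : m+2+(M-(m+2)) = M := by omega
      rw [hEq] at this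
      linarith
end

section
/- The function f(p) = t^(S)(1,p) - t^(S)(2,p), where t^(S)(N,p) = 2 - (1-p) + (2(1-p) - (1 - (1-p)^(N+1))/p)/N, is strictly decreasing on (p*, 2/9] for any p* ∈ (0.17, 0.18), and f(2/9) > 0.018; in particular f(p) > 0 on (p*, 2/9]. -/
theorem stmt_17 :
    ∀ tS : ℕ → ℝ → ℝ,
      (∀ N p, tS N p
        = 2 - (1 - p) + (2 * (1 - p) - (1 - (1 - p) ^ (N + 1)) / p) / (N : ℝ)) →
    ∀ f : ℝ → ℝ, (∀ p, f p = tS 1 p - tS 2 p) →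
    (∀ pstar : ℝ, pstar ∈ Set.Ioo (0.17 : ℝ) 0.18 →
      StrictAntiOn f (Set.Ioc pstar (2 / 9)) ∧
      ∀ p ∈ Set.Ioc pstar (2 / 9 : ℝ), f p > 0) ∧
    f (2 / 9) > 0.018 := by
  intro tS htS f hf
  have key : ∀ p : ℝ, 0 < p → f p = (p ^ 2 - 3 * p + 1) / 2 := by
    intro p hp
    rw [hf, htS, htS]
    have hp' : p ≠ 0 := ne_of_gt hp
    push_cast
    field_simp
    ring
  constructor
  · intro pstar hps
    have hps1 : (0.17 : ℝ) < pstar := hps.1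
    constructor
    · intro a ha b hb hab
      have ha0 : (0:ℝ) < a := lt_trans (by linarith) ha.1
      have hb0 : (0:ℝ) < b := lt_trans ha0 hab
      rw [key a ha0, key b hb0]
      have hb2 : b ≤ 2/9 := hb.2
      nlinarith [mul_pos (sub_pos.2 hab) (by linarith : (0:ℝ) < 3 - a - b)]
    · intro p hp
      have hp0 : (0:ℝ) < p := lt_trans (by linarith) hp.1
      rw [key p hp0]
      have : p ≤ 2/9 := hp.2
      nlinarith
  · rw [key (2/9) (by norm_num)]
    norm_num
end
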